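/- arXiv:2408.12862 — 4 statements merged into one kernel-verified Lean document; each statement's English description precedes it below -/
import Mathlib

section
/- Fix n ≥ 2 and let G=(V,E) be the complete communication graph with n vertices (E = all ordered pairs of distinct vertices). Then every weakly fair execution (C_t), (γ_t) of the protocol CIW_n on G satisfies: the configuration C_{S} at the end of the (2n+4)-th round of (γ_t) is stable and every agent has phase 4 (output yes) in it, where S is the total length of the first 2n+4 rounds of (γ_t). -/
/-!
Population protocols: framework and the protocol `CIW_n`.

STATEMENT 7: In every configuration `C` reachable from the initial configuration
under the protocol `CIW_n` on a communication graph with `n` vertices, the sum of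
`cnt` over all agents whose phase is 3 or 4 equals the number of such agents.
-/

namespace CGI

attribute [local instance] Classical.propDecidable

noncomputable section

variable {V Q : Type*}

/-- One interaction step: the initiator `e.1` and the responder `e.2` update their
states according to the transition function `δ`; everyone else is unchanged. -/
def stepFn (δ : Q × Q → Q × Q) (C : V → Q) (e : V × V) : V → Q :=
  fun w =>
    if w = e.1 then (δ (C e.1, C e.2)).1
    else if w = e.2 then (δ (C e.1, C e.2)).2
    else C w

/-- Reachability between configurations by finitely many steps over arcs of `E`. -/
def Reach (δ : Q × Q → Q × Q) (E : V × V → Prop) (C C' : V → Q) : Prop :=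
  Relation.ReflTransGen (fun D D' => ∃ e, E e ∧ D' = stepFn δ D e) C C'

/-- A communication graph: no self-loops and weak connectivity. -/
def IsCommGraph (E : V × V → Prop) : Prop :=
  (∀ v : V, ¬ E (v, v)) ∧
  ∀ u w : V, Relation.ReflTransGen (fun a b => E (a, b) ∨ E (b, a)) u w

/-- States of the protocol `CIW_n`. -/
structure StW where
  leader : Bool  -- `true` = L, `false` = F
  phase : ℕ
  mode : Bool    -- `false` = 0, `true` = 1
  cnt : ℕ
  deriving DecidableEq

/-- The initial state `(L,1,0,1)` of `CIW_n`. -/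
def initW : StW := ⟨true, 1, false, 1⟩

/-- The transition rules (R1)–(R5) of `CIW_n` for initiator `a` and responder `b`;
additions to `cnt` are truncated at `n`. -/
def ciwPair (n : ℕ) (a b : StW) : StW × StW :=
  if a.leader = true ∧ b.leader = true then
    -- (R1)
    let c := min n (a.cnt + b.cnt)
    if c = n then (⟨true, 2, a.mode, 0⟩, ⟨false, b.phase, b.mode, 0⟩)
    else (⟨true, a.phase, a.mode, c⟩, ⟨false, b.phase, b.mode, 0⟩)
  else if a.leader = true ∧ a.phase = 2 ∧ a.mode = b.mode then
    -- (R2)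
    let c := min n (a.cnt + 1)
    if c = n - 1 then (⟨true, 3, !a.mode, 1⟩, ⟨b.leader, b.phase, !b.mode, b.cnt⟩)
    else (⟨true, a.phase, a.mode, c⟩, ⟨b.leader, b.phase, !b.mode, b.cnt⟩)
  else if a.leader = true ∧ a.phase = 3 ∧ b.phase = 1 then
    -- (R3)
    (⟨false, a.phase, a.mode, a.cnt⟩, ⟨true, 2, b.mode, b.cnt⟩)
  else if a.phase = 3 ∧ b.phase = 3 ∧ 0 < a.cnt ∧ 0 < b.cnt then
    -- (R4)
    let c := min n (a.cnt + b.cnt)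
    if c = n then (⟨a.leader, 4, a.mode, c⟩, ⟨b.leader, b.phase, b.mode, 0⟩)
    else (⟨a.leader, a.phase, a.mode, c⟩, ⟨b.leader, b.phase, b.mode, 0⟩)
  else if a.phase = 4 then
    -- (R5)
    (a, ⟨b.leader, 4, b.mode, b.cnt⟩)
  else (a, b)

/-- The transition function of `CIW_n`. -/
def ciwδ (n : ℕ) : StW × StW → StW × StW := fun p => ciwPair n p.1 p.2

/-- Output of `CIW_n`: an agent outputs `yes` (`true`) iff its phase is 4. -/
def outW (q : StW) : Bool := q.phase == 4

/-- A configuration is stable if no reachable configuration changes any agent's output. -/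
def IsStable (out : Q → Bool) (δ : Q × Q → Q × Q) (E : V × V → Prop) (C : V → Q) : Prop :=
  ∀ C', Reach δ E C C' → ∀ a, out (C' a) = out (C a)

/-- The configuration after `t` steps of the execution driven by the schedule `γ`,
starting from the all-`ρ` initial configuration. -/
def conf (δ : Q × Q → Q × Q) (ρ : Q) (γ : ℕ → V × V) : ℕ → V → Q
  | 0 => fun _ => ρ
  | t + 1 => stepFn δ (conf δ ρ γ t) (γ t)

/-- The schedule uses only arcs of `E`. -/
def ValidSched (E : V × V → Prop) (γ : ℕ → V × V) : Prop := ∀ t, E (γ t)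

/-- A weakly fair schedule: every arc of `E` occurs infinitely often. -/
def WeaklyFair (E : V × V → Prop) (γ : ℕ → V × V) : Prop :=
  ValidSched E γ ∧ ∀ e, E e → ∀ t, ∃ s, t ≤ s ∧ γ s = e

/-- A complete communication graph. -/
def IsComplete (E : V × V → Prop) : Prop := ∀ u w : V, u ≠ w → E (u, w)

/-- The length of the first round of `γ` relative to the arc set `E`:
the length of the shortest prefix of `γ` containing every arc of `E`
(junk value `0` via `sInf ∅` if no such prefix exists). -/
def firstLen {α : Type*} (E : α → Prop) (γ : ℕ → α) : ℕ :=
  sInf {t : ℕ | ∀ e, E e → ∃ s < t, γ s = e}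

/-- `roundEnd E γ i` is the total length of the first `i` rounds of `γ`. -/
def roundEnd {α : Type*} (E : α → Prop) (γ : ℕ → α) : ℕ → ℕ
  | 0 => 0
  | i + 1 => roundEnd E γ i + firstLen E (fun t => γ (roundEnd E γ i + t))


/-! ### Auxiliary development for the proof -/

section Aux

variable {V : Type} [Fintype V]

open Finset

/-- Rule-evaluation lemmas for `ciwPair`. -/
lemma ciw_R1 (n : ℕ) (a b : StW) (ha : a.leader = true) (hb : b.leader = true) :
    ciwPair n a b =
      if min n (a.cnt + b.cnt) = n then (⟨true, 2, a.mode, 0⟩, ⟨false, b.phase, b.mode, 0⟩)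
      else (⟨true, a.phase, a.mode, min n (a.cnt + b.cnt)⟩, ⟨false, b.phase, b.mode, 0⟩) := by
  rw [ciwPair, if_pos ⟨ha, hb⟩]

lemma ciw_R2 (n : ℕ) (a b : StW) (hb : ¬ (a.leader = true ∧ b.leader = true))
    (h : a.leader = true ∧ a.phase = 2 ∧ a.mode = b.mode) :
    ciwPair n a b =
      if min n (a.cnt + 1) = n - 1 then (⟨true, 3, !a.mode, 1⟩, ⟨b.leader, b.phase, !b.mode, b.cnt⟩)
      else (⟨true, a.phase, a.mode, min n (a.cnt + 1)⟩, ⟨b.leader, b.phase, !b.mode, b.cnt⟩) := by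
  rw [ciwPair, if_neg hb, if_pos h]

lemma ciw_R3 (n : ℕ) (a b : StW) (h1 : ¬ (a.leader = true ∧ b.leader = true))
    (h2 : ¬ (a.leader = true ∧ a.phase = 2 ∧ a.mode = b.mode))
    (h : a.leader = true ∧ a.phase = 3 ∧ b.phase = 1) :
    ciwPair n a b = (⟨false, a.phase, a.mode, a.cnt⟩, ⟨true, 2, b.mode, b.cnt⟩) := by
  rw [ciwPair, if_neg h1, if_neg h2, if_pos h]

lemma ciw_R4 (n : ℕ) (a b : StW) (h1 : ¬ (a.leader = true ∧ b.leader = true))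
    (h2 : ¬ (a.leader = true ∧ a.phase = 2 ∧ a.mode = b.mode))
    (h3 : ¬ (a.leader = true ∧ a.phase = 3 ∧ b.phase = 1))
    (h : a.phase = 3 ∧ b.phase = 3 ∧ 0 < a.cnt ∧ 0 < b.cnt) :
    ciwPair n a b =
      if min n (a.cnt + b.cnt) = n then
        (⟨a.leader, 4, a.mode, min n (a.cnt + b.cnt)⟩, ⟨b.leader, b.phase, b.mode, 0⟩)
      else (⟨a.leader, a.phase, a.mode, min n (a.cnt + b.cnt)⟩, ⟨b.leader, b.phase, b.mode, 0⟩) := by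
  rw [ciwPair, if_neg h1, if_neg h2, if_neg h3, if_pos h]

lemma ciw_R5 (n : ℕ) (a b : StW) (h1 : ¬ (a.leader = true ∧ b.leader = true))
    (h2 : ¬ (a.leader = true ∧ a.phase = 2 ∧ a.mode = b.mode))
    (h3 : ¬ (a.leader = true ∧ a.phase = 3 ∧ b.phase = 1))
    (h4 : ¬ (a.phase = 3 ∧ b.phase = 3 ∧ 0 < a.cnt ∧ 0 < b.cnt))
    (h : a.phase = 4) :
    ciwPair n a b = (a, ⟨b.leader, 4, b.mode, b.cnt⟩) := by
  rw [ciwPair, if_neg h1, if_neg h2, if_neg h3, if_neg h4, if_pos h]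

lemma ciw_none (n : ℕ) (a b : StW) (h1 : ¬ (a.leader = true ∧ b.leader = true))
    (h2 : ¬ (a.leader = true ∧ a.phase = 2 ∧ a.mode = b.mode))
    (h3 : ¬ (a.leader = true ∧ a.phase = 3 ∧ b.phase = 1))
    (h4 : ¬ (a.phase = 3 ∧ b.phase = 3 ∧ 0 < a.cnt ∧ 0 < b.cnt))
    (h5 : ¬ a.phase = 4) :
    ciwPair n a b = (a, b) := by
  rw [ciwPair, if_neg h1, if_neg h2, if_neg h3, if_neg h4, if_neg h5]

/-! ### Counting helpers -/

/-- Sum of a state statistic over all agents. -/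
def cntf (f : StW → ℕ) (C : V → StW) : ℕ := ∑ w, f (C w)

def f3 : StW → ℕ := fun q => if q.phase = 3 then 1 else 0
def fL : StW → ℕ := fun q => if q.leader = true then 1 else 0
def fmis (m : Bool) : StW → ℕ := fun q => if q.mode ≠ m then 1 else 0
def ftok : StW → ℕ := fun q => if q.phase = 3 then q.cnt else 0
def fcnt : StW → ℕ := fun q => q.cnt

lemma f3_le (q : StW) : f3 q ≤ 1 := by unfold f3; split <;> omega
lemma fL_le (q : StW) : fL q ≤ 1 := by unfold fL; split <;> omega
lemma fmis_le (m : Bool) (q : StW) : fmis m q ≤ 1 := by unfold fmis; split <;> omega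

lemma sum_split1 (u : V) (f : V → ℕ) :
    ∑ w, f w = f u + ∑ w ∈ univ.erase u, f w := by
  rw [Finset.add_sum_erase _ f (mem_univ u)]

lemma sum_split (u v : V) (huv : u ≠ v) (f : V → ℕ) :
    ∑ w, f w = f u + (f v + ∑ w ∈ (univ.erase u).erase v, f w) := by
  rw [Finset.add_sum_erase _ f (Finset.mem_erase.mpr ⟨huv.symm, mem_univ v⟩),
    Finset.add_sum_erase _ f (mem_univ u)]

lemma card_erase1 (u : V) : (univ.erase u : Finset V).card = Fintype.card V - 1 := by
  rw [Finset.card_erase_of_mem (mem_univ u), Finset.card_univ]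

lemma card_erase2 (u v : V) (huv : u ≠ v) :
    ((univ.erase u).erase v : Finset V).card = Fintype.card V - 2 := by
  rw [Finset.card_erase_of_mem (Finset.mem_erase.mpr ⟨huv.symm, mem_univ v⟩), card_erase1]
  omega

lemma sum_le_card {s : Finset V} {f : V → ℕ} (hf : ∀ w, f w ≤ 1) :
    ∑ w ∈ s, f w ≤ s.card := by
  calc ∑ w ∈ s, f w ≤ ∑ _w ∈ s, 1 := Finset.sum_le_sum fun i _ => hf i
  _ = s.card := by simp

lemma cntf_congr {f : StW → ℕ} {C C' : V → StW} (h : ∀ w, f (C' w) = f (C w)) :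
    cntf f C' = cntf f C := Finset.sum_congr rfl fun w _ => h w

lemma cntf_congr' {f g : StW → ℕ} {C : V → StW} (h : ∀ w, f (C w) = g (C w)) :
    cntf f C = cntf g C := Finset.sum_congr rfl fun w _ => h w

lemma cntf_update {u v : V} (huv : u ≠ v) {C C' : V → StW}
    (ho : ∀ w, w ≠ u → w ≠ v → C' w = C w) (f : StW → ℕ) :
    cntf f C' + (f (C u) + f (C v)) = cntf f C + (f (C' u) + f (C' v)) := by
  rw [cntf, cntf, sum_split u v huv (fun w => f (C w)), sum_split u v huv (fun w => f (C' w))]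
  have he : ∑ w ∈ (univ.erase u).erase v, f (C' w)
      = ∑ w ∈ (univ.erase u).erase v, f (C w) := by
    refine Finset.sum_congr rfl fun w hw => ?_
    obtain ⟨hwv, hwu, -⟩ : w ≠ v ∧ w ≠ u ∧ w ∈ (univ : Finset V) := by
      simpa [Finset.mem_erase] using hw
    rw [ho w hwu hwv]
  omega

lemma pair_le_cntf {u v : V} (huv : u ≠ v) (f : StW → ℕ) (C : V → StW) :
    f (C u) + f (C v) ≤ cntf f C := by
  rw [cntf, sum_split u v huv (fun w => f (C w))]; omega

lemma single_le_cntf (u : V) (f : StW → ℕ) (C : V → StW) : f (C u) ≤ cntf f C :=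
  Finset.single_le_sum (f := fun w => f (C w)) (fun i _ => Nat.zero_le _) (mem_univ u)

lemma cntf_le_card {f : StW → ℕ} (hf : ∀ q, f q ≤ 1) (C : V → StW) :
    cntf f C ≤ Fintype.card V := by
  calc cntf f C ≤ (univ : Finset V).card := sum_le_card fun w => hf _
  _ = Fintype.card V := Finset.card_univ

lemma cntf_le1 {f : StW → ℕ} (hf : ∀ q, f q ≤ 1) {C : V → StW} {u : V}
    (hu : f (C u) = 0) : cntf f C ≤ Fintype.card V - 1 := by
  have h1 : cntf f C = f (C u) + ∑ w ∈ univ.erase u, f (C w) :=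
    sum_split1 u (fun w => f (C w))
  have h2 : ∑ w ∈ univ.erase u, f (C w) ≤ Fintype.card V - 1 := by
    rw [← card_erase1 u]; exact sum_le_card fun w => hf _
  omega

lemma cntf_le2 {f : StW → ℕ} (hf : ∀ q, f q ≤ 1) {C : V → StW} {u v : V} (huv : u ≠ v)
    (hu : f (C u) = 0) (hv : f (C v) = 0) : cntf f C ≤ Fintype.card V - 2 := by
  have h1 := sum_split u v huv (fun w => f (C w))
  have h2 : ∑ w ∈ (univ.erase u).erase v, f (C w) ≤ Fintype.card V - 2 := by
    rw [← card_erase2 u v huv]; exact sum_le_card fun w => hf _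
  rw [cntf]; omega

lemma cntf_eq_pred {f : StW → ℕ} {C : V → StW} {u : V} (hu : f (C u) = 0)
    (h1 : ∀ w, w ≠ u → f (C w) = 1) : cntf f C = Fintype.card V - 1 := by
  have h2 : cntf f C = f (C u) + ∑ w ∈ univ.erase u, f (C w) :=
    sum_split1 u (fun w => f (C w))
  have h3 : ∑ w ∈ univ.erase u, f (C w) = ∑ _w ∈ univ.erase u, 1 :=
    Finset.sum_congr rfl fun w hw => h1 w (Finset.ne_of_mem_erase hw)
  rw [h2, h3, hu]; simp [card_erase1]

lemma all_erase_one {f : StW → ℕ} (hf : ∀ q, f q ≤ 1) {C : V → StW} {u : V}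
    (hu : f (C u) = 0) (h : Fintype.card V - 1 ≤ cntf f C) :
    ∀ w, w ≠ u → f (C w) = 1 := by
  intro w hw
  by_contra hc
  have h0 : f (C w) = 0 := by have := hf (C w); omega
  have h2 : 2 ≤ Fintype.card V := by
    have : Nontrivial V := ⟨⟨w, u, hw⟩⟩
    exact Fintype.one_lt_card
  have := cntf_le2 hf hw h0 hu
  omega

lemma exists_f_ne_zero {f : StW → ℕ} {C : V → StW} (h : cntf f C ≠ 0) :
    ∃ u, f (C u) ≠ 0 := by
  obtain ⟨u, -, hu⟩ :=
    Finset.exists_ne_zero_of_sum_ne_zero (f := fun w => f (C w)) (s := univ) (by exact h)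
  exact ⟨u, hu⟩

lemma exists_two_of_cntf {f : StW → ℕ} (hf : ∀ q, f q ≤ 1) {C : V → StW}
    (h : 2 ≤ cntf f C) : ∃ u v, u ≠ v ∧ f (C u) = 1 ∧ f (C v) = 1 := by
  obtain ⟨u, hu⟩ := exists_f_ne_zero (f := f) (C := C) (by omega)
  have h1 : cntf f C = f (C u) + ∑ w ∈ univ.erase u, f (C w) :=
    sum_split1 u (fun w => f (C w))
  have hu1 : f (C u) = 1 := by have := hf (C u); omega
  have h2 : ∑ w ∈ univ.erase u, f (C w) ≠ 0 := by omega
  obtain ⟨v, hv, hv0⟩ := Finset.exists_ne_zero_of_sum_ne_zero h2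
  exact ⟨u, v, (Finset.ne_of_mem_erase hv).symm, hu1, by have := hf (C v); omega⟩


lemma cntf_split1 {u : V} (f : StW → ℕ) (C : V → StW) :
    cntf f C = f (C u) + ∑ w ∈ univ.erase u, f (C w) := by
  rw [cntf]; exact sum_split1 u (fun w => f (C w))

lemma cntf_split {u v : V} (huv : u ≠ v) (f : StW → ℕ) (C : V → StW) :
    cntf f C = f (C u) + (f (C v) + ∑ w ∈ (univ.erase u).erase v, f (C w)) := by
  rw [cntf]; exact sum_split u v huv (fun w => f (C w))


lemma three_le_card {u v w : V} (h1 : u ≠ v) (h2 : u ≠ w) (h3 : v ≠ w) :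
    3 ≤ Fintype.card V := by
  have hc : ({u, v, w} : Finset V).card = 3 := by
    rw [Finset.card_insert_of_notMem (by simp [h1, h2]),
      Finset.card_insert_of_notMem (by simp [h3]), Finset.card_singleton]
  calc 3 = ({u, v, w} : Finset V).card := hc.symm
  _ ≤ (univ : Finset V).card := Finset.card_le_univ _
  _ = Fintype.card V := Finset.card_univ

lemma cntf_le3 {f : StW → ℕ} (hf : ∀ q, f q ≤ 1) {C : V → StW} {u v w : V}
    (huv : u ≠ v) (huw : u ≠ w) (hvw : v ≠ w)
    (hu : f (C u) = 0) (hv : f (C v) = 0) (hw : f (C w) = 0) :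
    cntf f C ≤ Fintype.card V - 3 := by
  have hsp := cntf_split huv f C
  have hmem : w ∈ (univ.erase u).erase v :=
    Finset.mem_erase.mpr ⟨hvw.symm, Finset.mem_erase.mpr ⟨huw.symm, mem_univ w⟩⟩
  have hsp2 : ∑ z ∈ (univ.erase u).erase v, f (C z)
      = f (C w) + ∑ z ∈ ((univ.erase u).erase v).erase w, f (C z) :=
    (Finset.add_sum_erase _ (fun z => f (C z)) hmem).symm
  have hb : ∑ z ∈ ((univ.erase u).erase v).erase w, f (C z)
      ≤ Fintype.card V - 3 := by
    have h9 : ∑ z ∈ ((univ.erase u).erase v).erase w, f (C z)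
        ≤ (((univ.erase u).erase v).erase w).card :=
      sum_le_card (fun z => hf _)
    rw [Finset.card_erase_of_mem hmem, card_erase2 u v huv] at h9
    omega
  omega

lemma bool_ne {b m : Bool} (h : ¬ b = m) : b = !m := by
  cases b <;> cases m <;> simp_all

/-! ### The stages of the protocol -/

/-- Stage A: leader election in phase 1. -/
def StA (n : ℕ) (C : V → StW) : Prop :=
  (∀ v, (C v).phase = 1) ∧ (∀ v, (C v).mode = false) ∧
  (∀ v, (C v).leader = false → (C v).cnt = 0) ∧
  (∀ v, (C v).leader = true → 0 < (C v).cnt) ∧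
  cntf fcnt C = n ∧ 2 ≤ cntf fL C

/-- Stage B: a unique leader `ℓ` in phase 2 is counting agents. -/
def StB (n : ℕ) (ℓ : V) (C : V → StW) : Prop :=
  (C ℓ).leader = true ∧ (C ℓ).phase = 2 ∧
  (∀ v, v ≠ ℓ → (C v).leader = false) ∧
  (∀ v, v ≠ ℓ → (C v).phase = 1 ∨ (C v).phase = 3) ∧
  (∀ v, (C v).phase = 1 → (C v).cnt = 0) ∧
  (C ℓ).cnt = cntf (fmis (C ℓ).mode) C ∧
  cntf ftok C = cntf f3 C ∧
  (∃ x, x ≠ ℓ ∧ (C x).mode = (C ℓ).mode)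

/-- Stage C: a unique leader `ℓ` in phase 3 is about to hand over leadership. -/
def StC (n : ℕ) (ℓ : V) (C : V → StW) : Prop :=
  (C ℓ).leader = true ∧ (C ℓ).phase = 3 ∧
  (∀ v, v ≠ ℓ → (C v).leader = false) ∧
  (∀ v, v ≠ ℓ → (C v).phase = 1 ∨ (C v).phase = 3) ∧
  (∀ v, (C v).phase = 1 → (C v).cnt = 0) ∧
  (∀ v, (C v).mode = (C ℓ).mode) ∧
  cntf ftok C = cntf f3 C ∧
  (∃ x, (C x).phase = 1)

/-- Stage D: all agents are in phase 3 and tokens are being merged. -/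
def StD (n : ℕ) (C : V → StW) : Prop :=
  (∀ v, (C v).phase = 3) ∧ cntf fL C ≤ 1 ∧ cntf fcnt C = n ∧
  (∃ u v, u ≠ v ∧ 0 < (C u).cnt ∧ 0 < (C v).cnt)

/-- Stage E: some agent is in phase 4 and the output is spreading. -/
def StE (n : ℕ) (C : V → StW) : Prop :=
  (∀ v, (C v).phase = 3 ∨ (C v).phase = 4) ∧ (∃ v, (C v).phase = 4) ∧ cntf fL C ≤ 1

/-- The global invariant. -/
def Inv (n : ℕ) (C : V → StW) : Prop :=
  StA n C ∨ (∃ ℓ, StB n ℓ C) ∨ (∃ ℓ, StC n ℓ C) ∨ StD n C ∨ StE n C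

/-- The rank of a configuration, measuring global progress. -/
def rk (n : ℕ) (C : V → StW) : ℕ :=
  if ∀ v, (C v).phase = 4 then 2*n+2
  else if ∃ v, (C v).phase = 4 then 2*n+1
  else if ∀ v, (C v).phase = 3 then 2*n
  else if ∃ v, (C v).leader = true ∧ (C v).phase = 3 then 2 * cntf f3 C
  else if ∃ v, (C v).leader = true ∧ (C v).phase = 2 then 2 * cntf f3 C + 1
  else 0


/-! ### Rank computations per stage -/

lemma nonempty_of_card {n : ℕ} (hn : 2 ≤ n) (hV : Fintype.card V = n) : Nonempty V := by
  rw [← Fintype.card_pos_iff]; omega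

lemma rk_A {n : ℕ} {C : V → StW} (hn : 2 ≤ n) (hV : Fintype.card V = n)
    (h : StA n C) : rk n C = 0 := by
  obtain ⟨v0⟩ := nonempty_of_card hn hV
  have h1 : ¬ ∀ v : V, (C v).phase = 4 := fun hh => by have := hh v0; rw [h.1 v0] at this; omega
  have h2 : ¬ ∃ v : V, (C v).phase = 4 := by
    rintro ⟨v, hv⟩; rw [h.1 v] at hv; omega
  have h3 : ¬ ∀ v : V, (C v).phase = 3 := fun hh => by have := hh v0; rw [h.1 v0] at this; omega
  have h4 : ¬ ∃ v : V, (C v).leader = true ∧ (C v).phase = 3 := by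
    rintro ⟨v, -, hv⟩; rw [h.1 v] at hv; omega
  have h5 : ¬ ∃ v : V, (C v).leader = true ∧ (C v).phase = 2 := by
    rintro ⟨v, -, hv⟩; rw [h.1 v] at hv; omega
  rw [rk, if_neg h1, if_neg h2, if_neg h3, if_neg h4, if_neg h5]

lemma rk_B {n : ℕ} {ℓ : V} {C : V → StW} (h : StB n ℓ C) :
    rk n C = 2 * cntf f3 C + 1 := by
  obtain ⟨hl, hp, hof, hop, -, -, -, -⟩ := h
  have hph : ∀ v : V, (C v).phase ≠ 4 := by
    intro v
    by_cases hv : v = ℓ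
    · rw [hv, hp]; omega
    · rcases hop v hv with h1 | h1 <;> omega
  have h1 : ¬ ∀ v : V, (C v).phase = 4 := fun hh => hph ℓ (hh ℓ)
  have h2 : ¬ ∃ v : V, (C v).phase = 4 := by rintro ⟨v, hv⟩; exact hph v hv
  have h3 : ¬ ∀ v : V, (C v).phase = 3 := fun hh => by have := hh ℓ; omega
  have h4 : ¬ ∃ v : V, (C v).leader = true ∧ (C v).phase = 3 := by
    rintro ⟨v, hv1, hv2⟩
    by_cases hv : v = ℓ
    · rw [hv, hp] at hv2; omega
    · rw [hof v hv] at hv1; simp at hv1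
  have h5 : ∃ v : V, (C v).leader = true ∧ (C v).phase = 2 := ⟨ℓ, hl, hp⟩
  rw [rk, if_neg h1, if_neg h2, if_neg h3, if_neg h4, if_pos h5]

lemma cnt3_B_le {n : ℕ} {ℓ : V} {C : V → StW} (hV : Fintype.card V = n)
    (h : StB n ℓ C) : cntf f3 C ≤ n - 1 := by
  rw [← hV]
  exact cntf_le1 f3_le (u := ℓ) (by rw [f3, h.2.1]; simp)

lemma rk_C {n : ℕ} {ℓ : V} {C : V → StW} (h : StC n ℓ C) :
    rk n C = 2 * cntf f3 C := by
  obtain ⟨hl, hp, hof, hop, -, -, -, x, hx⟩ := h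
  have hph : ∀ v : V, (C v).phase ≠ 4 := by
    intro v
    by_cases hv : v = ℓ
    · rw [hv, hp]; omega
    · rcases hop v hv with h1 | h1 <;> omega
  have h1 : ¬ ∀ v : V, (C v).phase = 4 := fun hh => hph ℓ (hh ℓ)
  have h2 : ¬ ∃ v : V, (C v).phase = 4 := by rintro ⟨v, hv⟩; exact hph v hv
  have h3 : ¬ ∀ v : V, (C v).phase = 3 := fun hh => by have := hh x; omega
  have h4 : ∃ v : V, (C v).leader = true ∧ (C v).phase = 3 := ⟨ℓ, hl, hp⟩
  rw [rk, if_neg h1, if_neg h2, if_neg h3, if_pos h4]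

lemma cnt3_C_ge {n : ℕ} {ℓ : V} {C : V → StW} (h : StC n ℓ C) : 1 ≤ cntf f3 C := by
  have := single_le_cntf ℓ f3 C
  rw [f3] at this; rw [h.2.1] at this; simp at this; omega

lemma cnt3_C_le {n : ℕ} {ℓ : V} {C : V → StW} (hV : Fintype.card V = n)
    (h : StC n ℓ C) : cntf f3 C ≤ n - 1 := by
  obtain ⟨x, hx⟩ := h.2.2.2.2.2.2.2
  rw [← hV]
  exact cntf_le1 f3_le (u := x) (by rw [f3, hx]; simp)

lemma rk_D {n : ℕ} {C : V → StW} (hn : 2 ≤ n) (hV : Fintype.card V = n)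
    (h : StD n C) : rk n C = 2*n := by
  obtain ⟨v0⟩ := nonempty_of_card hn hV
  have h1 : ¬ ∀ v : V, (C v).phase = 4 := fun hh => by
    have := hh v0; rw [h.1 v0] at this; omega
  have h2 : ¬ ∃ v : V, (C v).phase = 4 := by rintro ⟨v, hv⟩; rw [h.1 v] at hv; omega
  rw [rk, if_neg h1, if_neg h2, if_pos h.1]

lemma rk_E4 {n : ℕ} {C : V → StW} (h : ∀ v : V, (C v).phase = 4) : rk n C = 2*n+2 := by
  rw [rk, if_pos h]

lemma rk_E3 {n : ℕ} {C : V → StW} (h : StE n C) (h4 : ¬ ∀ v : V, (C v).phase = 4) :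
    rk n C = 2*n+1 := by
  rw [rk, if_neg h4, if_pos h.2.1]

lemma rk_E {n : ℕ} {C : V → StW} (h : StE n C) :
    rk n C = 2*n+1 ∨ rk n C = 2*n+2 := by
  by_cases h4 : ∀ v : V, (C v).phase = 4
  · exact Or.inr (rk_E4 h4)
  · exact Or.inl (rk_E3 h h4)

/-! ### Stage determination from rank -/

lemma stA_det {n : ℕ} {C : V → StW} (hn : 2 ≤ n) (hV : Fintype.card V = n)
    (h : Inv n C) (hr : rk n C = 0) : StA n C := by
  rcases h with h | ⟨ℓ, h⟩ | ⟨ℓ, h⟩ | h | h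
  · exact h
  · rw [rk_B h] at hr; omega
  · have := rk_C h; have := cnt3_C_ge h; omega
  · rw [rk_D hn hV h] at hr; omega
  · rcases rk_E h with h2 | h2 <;> omega

lemma stB_det {n d : ℕ} {C : V → StW} (hn : 2 ≤ n) (hV : Fintype.card V = n)
    (h : Inv n C) (hr : rk n C = 2*d+1) (hd : d ≤ n - 1) :
    ∃ ℓ, StB n ℓ C ∧ cntf f3 C = d := by
  rcases h with h | ⟨ℓ, h⟩ | ⟨ℓ, h⟩ | h | h
  · rw [rk_A hn hV h] at hr; omega
  · exact ⟨ℓ, h, by have := rk_B h; omega⟩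
  · have := rk_C h; omega
  · rw [rk_D hn hV h] at hr; omega
  · rcases rk_E h with h2 | h2 <;> omega

lemma stC_det {n d : ℕ} {C : V → StW} (hn : 2 ≤ n) (hV : Fintype.card V = n)
    (h : Inv n C) (hr : rk n C = 2*d) (h1 : 1 ≤ d) (h2 : d ≤ n - 1) :
    ∃ ℓ, StC n ℓ C ∧ cntf f3 C = d := by
  rcases h with h | ⟨ℓ, h⟩ | ⟨ℓ, h⟩ | h | h
  · rw [rk_A hn hV h] at hr; omega
  · have := rk_B h; omega
  · exact ⟨ℓ, h, by have := rk_C h; omega⟩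
  · rw [rk_D hn hV h] at hr; omega
  · rcases rk_E h with h3 | h3 <;> omega

lemma stD_det {n : ℕ} {C : V → StW} (hn : 2 ≤ n) (hV : Fintype.card V = n)
    (h : Inv n C) (hr : rk n C = 2*n) : StD n C := by
  rcases h with h | ⟨ℓ, h⟩ | ⟨ℓ, h⟩ | h | h
  · rw [rk_A hn hV h] at hr; omega
  · have := rk_B h; have := cnt3_B_le hV h; omega
  · have := rk_C h; have := cnt3_C_le hV h; omega
  · exact h
  · rcases rk_E h with h2 | h2 <;> omega

lemma stE_det {n : ℕ} {C : V → StW} (hn : 2 ≤ n) (hV : Fintype.card V = n)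
    (h : Inv n C) (hr : rk n C = 2*n+1) : StE n C := by
  rcases h with h | ⟨ℓ, h⟩ | ⟨ℓ, h⟩ | h | h
  · rw [rk_A hn hV h] at hr; omega
  · have := rk_B h; have := cnt3_B_le hV h; omega
  · have := rk_C h; have := cnt3_C_le hV h; omega
  · rw [rk_D hn hV h] at hr; omega
  · exact h

lemma rk_le {n : ℕ} {C : V → StW} (hV : Fintype.card V = n) : rk n C ≤ 2*n+2 := by
  have hc : cntf f3 C ≤ n := hV ▸ cntf_le_card f3_le C
  rw [rk]; split_ifs <;> omega


/-! ### Evaluating a step -/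

lemma step_u (n : ℕ) (C : V → StW) (u v : V) :
    stepFn (ciwδ n) C (u, v) u = (ciwPair n (C u) (C v)).1 := by
  unfold stepFn ciwδ; simp

lemma step_v (n : ℕ) (C : V → StW) {u v : V} (huv : u ≠ v) :
    stepFn (ciwδ n) C (u, v) v = (ciwPair n (C u) (C v)).2 := by
  unfold stepFn ciwδ; simp [huv.symm]

lemma step_o (n : ℕ) (C : V → StW) {u v : V} (w : V) (hwu : w ≠ u) (hwv : w ≠ v) :
    stepFn (ciwδ n) C (u, v) w = C w := by
  unfold stepFn ciwδ; simp [hwu, hwv]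

lemma step_id {n : ℕ} {C : V → StW} {u v : V}
    (h : ciwPair n (C u) (C v) = (C u, C v)) :
    stepFn (ciwδ n) C (u, v) = C := by
  funext w
  by_cases h1 : w = u
  · subst h1; rw [step_u, h]
  · by_cases h2 : w = v
    · subst h2; rw [step_v n C (Ne.symm h1), h]
    · exact step_o n C w h1 h2

/-! ### Step lemma for Stage A -/

lemma stepA {n : ℕ} {C : V → StW} {u v : V} (hn : 2 ≤ n) (hV : Fintype.card V = n)
    (huv : u ≠ v) (hA : StA n C) :
    (∀ w, (C w).phase ≤ (stepFn (ciwδ n) C (u, v) w).phase) ∧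
    ((StA n (stepFn (ciwδ n) C (u, v)) ∧
        ∀ w, (stepFn (ciwδ n) C (u, v) w).leader = true → (C w).leader = true)
      ∨ (∃ ℓ, StB n ℓ (stepFn (ciwδ n) C (u, v)))) := by
  obtain ⟨hph, hmo, hf0, hlp, htot, hnL⟩ := hA
  set C' := stepFn (ciwδ n) C (u, v) with hC'
  have ho : ∀ w, w ≠ u → w ≠ v → C' w = C w := fun w h1 h2 => step_o n C w h1 h2
  by_cases ha : (C u).leader = true
  · by_cases hb : (C v).leader = true
    · -- R1 fires
      have hle : (C u).cnt + (C v).cnt ≤ n := by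
        have := pair_le_cntf huv fcnt C
        rw [htot] at this; exact this
      have hmin : min n ((C u).cnt + (C v).cnt) = (C u).cnt + (C v).cnt :=
        Nat.min_eq_right hle
      have hr1 := ciw_R1 n (C u) (C v) ha hb
      by_cases hc : (C u).cnt + (C v).cnt = n
      · -- the unique leader is elected: go to stage B
        have hu' : C' u = ⟨true, 2, (C u).mode, 0⟩ := by
          rw [hC', step_u, hr1, if_pos (by rw [hmin]; exact hc)]
        have hv' : C' v = ⟨false, (C v).phase, (C v).mode, 0⟩ := by
          rw [hC', step_v n C huv, hr1, if_pos (by rw [hmin]; exact hc)]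
        have hsplit := cntf_split huv fcnt C
        have hrest : ∀ w ∈ (univ.erase u).erase v, fcnt (C w) = 0 := by
          rw [← Finset.sum_eq_zero_iff]
          have e1 : fcnt (C u) = (C u).cnt := rfl
          have e2 : fcnt (C v) = (C v).cnt := rfl
          omega
        have hcnt0 : ∀ w, w ≠ u → w ≠ v → (C w).cnt = 0 := by
          intro w h1 h2
          exact hrest w (Finset.mem_erase.mpr ⟨h2, Finset.mem_erase.mpr ⟨h1, mem_univ w⟩⟩)
        have hld0 : ∀ w, w ≠ u → w ≠ v → (C w).leader = false := by
          intro w h1 h2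
          cases hl : (C w).leader
          · rfl
          · have := hlp w hl; have := hcnt0 w h1 h2; omega
        have hmode' : ∀ w, (C' w).mode = false := by
          intro w
          by_cases h1 : w = u
          · rw [h1, hu']; exact hmo u
          · by_cases h2 : w = v
            · rw [h2, hv']; exact hmo v
            · rw [ho w h1 h2]; exact hmo w
        have hphase' : ∀ w, w ≠ u → (C' w).phase = 1 := by
          intro w h1
          by_cases h2 : w = v
          · rw [h2, hv']; exact hph v
          · rw [ho w h1 h2]; exact hph w
        have hcnt' : ∀ w, w ≠ u → (C' w).cnt = 0 := by
          intro w h1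
          by_cases h2 : w = v
          · rw [h2, hv']
          · rw [ho w h1 h2]; exact hcnt0 w h1 h2
        refine ⟨?_, Or.inr ⟨u, ?_⟩⟩
        · intro w
          by_cases h1 : w = u
          · rw [h1, hu', hph u]; exact one_le_two
          · rw [hphase' w h1, hph w]
        refine ⟨by rw [hu'], by rw [hu'], ?_, ?_, ?_, ?_, ?_, ?_⟩
        · intro w h1
          by_cases h2 : w = v
          · rw [h2, hv']
          · rw [ho w h1 h2]; exact hld0 w h1 h2
        · intro w h1; exact Or.inl (hphase' w h1)
        · intro w h1
          by_cases h2 : w = u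
          · rw [h2, hu'] at h1; simp at h1
          · exact hcnt' w h2
        · have hz : cntf (fmis (C' u).mode) C' = 0 := by
            apply Finset.sum_eq_zero
            intro w _
            have h1 : (C' w).mode = false := hmode' w
            have h2 : (C' u).mode = false := hmode' u
            unfold fmis; rw [h1, h2]; simp
          rw [hz, hu']
        · have t1 : cntf ftok C' = 0 := by
            apply Finset.sum_eq_zero
            intro w _
            by_cases h1 : w = u
            · rw [h1]; unfold ftok; rw [hu']; simp
            · unfold ftok; rw [hphase' w h1]; simp
          have t2 : cntf f3 C' = 0 := by
            apply Finset.sum_eq_zero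
            intro w _
            by_cases h1 : w = u
            · rw [h1]; unfold f3; rw [hu']; simp
            · unfold f3; rw [hphase' w h1]; simp
          rw [t1, t2]
        · exact ⟨v, huv.symm, by rw [hmode' v, hmode' u]⟩
      · -- merge without election: stay in stage A
        have hu' : C' u = ⟨true, (C u).phase, (C u).mode, (C u).cnt + (C v).cnt⟩ := by
          rw [hC', step_u, hr1, if_neg (by rw [hmin]; exact hc), hmin]
        have hv' : C' v = ⟨false, (C v).phase, (C v).mode, 0⟩ := by
          rw [hC', step_v n C huv, hr1, if_neg (by rw [hmin]; exact hc)]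
        -- there is a third leader
        have hsplit := cntf_split huv fcnt C
        have hrest : ∑ w ∈ (univ.erase u).erase v, fcnt (C w) ≠ 0 := by
          have e1 : fcnt (C u) = (C u).cnt := rfl
          have e2 : fcnt (C v) = (C v).cnt := rfl
          omega
        obtain ⟨z, hz, hz0⟩ := Finset.exists_ne_zero_of_sum_ne_zero hrest
        obtain ⟨hzv, hzu, -⟩ : z ≠ v ∧ z ≠ u ∧ z ∈ (univ : Finset V) := by
          simpa [Finset.mem_erase] using hz
        have hzl : (C z).leader = true := by
          cases hl : (C z).leader
          · exfalso; exact hz0 (hf0 z hl)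
          · rfl
        have hnL3 : 3 ≤ cntf fL C := by
          have e1 := cntf_split huv fL C
          have e2 : fL (C z) ≤ ∑ w ∈ (univ.erase u).erase v, fL (C w) :=
            Finset.single_le_sum (f := fun w => fL (C w)) (fun i _ => Nat.zero_le _)
              (Finset.mem_erase.mpr ⟨hzv, Finset.mem_erase.mpr ⟨hzu, mem_univ z⟩⟩)
          have e3 : fL (C u) = 1 := by simp [fL, ha]
          have e4 : fL (C v) = 1 := by simp [fL, hb]
          have e5 : fL (C z) = 1 := by simp [fL, hzl]
          omega
        have hLu := cntf_update huv ho fL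
        have hCu := cntf_update huv ho fcnt
        have eLu : fL (C' u) = 1 := by simp [fL, hu']
        have eLv : fL (C' v) = 0 := by simp [fL, hv']
        have eL1 : fL (C u) = 1 := by simp [fL, ha]
        have eL2 : fL (C v) = 1 := by simp [fL, hb]
        have eC1 : fcnt (C' u) = (C u).cnt + (C v).cnt := by simp [fcnt, hu']
        have eC2 : fcnt (C' v) = 0 := by simp [fcnt, hv']
        have eC3 : fcnt (C u) = (C u).cnt := rfl
        have eC4 : fcnt (C v) = (C v).cnt := rfl
        refine ⟨?_, Or.inl ⟨⟨?_, ?_, ?_, ?_, ?_, ?_⟩, ?_⟩⟩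
        · intro w
          by_cases h1 : w = u
          · rw [h1, hu']
          · by_cases h2 : w = v
            · rw [h2, hv']
            · rw [ho w h1 h2]
        · intro w
          by_cases h1 : w = u
          · rw [h1, hu']; exact hph u
          · by_cases h2 : w = v
            · rw [h2, hv']; exact hph v
            · rw [ho w h1 h2]; exact hph w
        · intro w
          by_cases h1 : w = u
          · rw [h1, hu']; exact hmo u
          · by_cases h2 : w = v
            · rw [h2, hv']; exact hmo v
            · rw [ho w h1 h2]; exact hmo w
        · intro w hw
          by_cases h1 : w = u
          · rw [h1, hu'] at hw; simp at hw
          · by_cases h2 : w = v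
            · rw [h2, hv']
            · rw [ho w h1 h2] at hw ⊢; exact hf0 w hw
        · intro w hw
          by_cases h1 : w = u
          · rw [h1, hu']
            have := hlp u ha; simp; omega
          · by_cases h2 : w = v
            · rw [h2, hv'] at hw; simp at hw
            · rw [ho w h1 h2] at hw ⊢; exact hlp w hw
        · omega
        · omega
        · intro w hw
          by_cases h1 : w = u
          · rw [h1]; exact ha
          · by_cases h2 : w = v
            · rw [h2, hv'] at hw; simp at hw
            · rw [ho w h1 h2] at hw; exact hw
    · -- no rule applies
      have hid : ciwPair n (C u) (C v) = (C u, C v) := by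
        apply ciw_none
        · rintro ⟨-, h⟩; exact hb h
        · rintro ⟨-, h, -⟩; rw [hph u] at h; omega
        · rintro ⟨-, h, -⟩; rw [hph u] at h; omega
        · rintro ⟨h, -⟩; rw [hph u] at h; omega
        · rw [hph u]; omega
      rw [hC', step_id hid]
      exact ⟨fun w => le_refl _, Or.inl ⟨⟨hph, hmo, hf0, hlp, htot, hnL⟩, fun w h => h⟩⟩
  · have hid : ciwPair n (C u) (C v) = (C u, C v) := by
      apply ciw_none
      · rintro ⟨h, -⟩; exact ha h
      · rintro ⟨h, -⟩; exact ha h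
      · rintro ⟨h, -⟩; exact ha h
      · rintro ⟨h, -⟩; rw [hph u] at h; omega
      · rw [hph u]; omega
    rw [hC', step_id hid]
    exact ⟨fun w => le_refl _, Or.inl ⟨⟨hph, hmo, hf0, hlp, htot, hnL⟩, fun w h => h⟩⟩


/-! ### Step lemma for Stage B -/

lemma stepB {n : ℕ} {C : V → StW} {u v ℓ : V} (hn : 2 ≤ n) (hV : Fintype.card V = n)
    (huv : u ≠ v) (hB : StB n ℓ C) :
    (∀ w, (C w).phase ≤ (stepFn (ciwδ n) C (u, v) w).phase) ∧
    ((StB n ℓ (stepFn (ciwδ n) C (u, v)) ∧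
        cntf f3 (stepFn (ciwδ n) C (u, v)) = cntf f3 C ∧
        (∀ w, (stepFn (ciwδ n) C (u, v) w).leader = (C w).leader) ∧
        (stepFn (ciwδ n) C (u, v) ℓ).mode = (C ℓ).mode ∧
        (∀ w, (C w).mode ≠ (C ℓ).mode →
          (stepFn (ciwδ n) C (u, v) w).mode ≠ (C ℓ).mode))
      ∨ ((∃ ℓ', StC n ℓ' (stepFn (ciwδ n) C (u, v))) ∧
          cntf f3 (stepFn (ciwδ n) C (u, v)) = cntf f3 C + 1)
      ∨ (StD n (stepFn (ciwδ n) C (u, v)) ∧ cntf f3 C = n - 1)) := by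
  obtain ⟨hl, hp2, hof, hop, h10, hcm, htk, hex⟩ := hB
  set C' := stepFn (ciwδ n) C (u, v) with hC'
  have ho : ∀ w, w ≠ u → w ≠ v → C' w = C w := fun w h1 h2 => step_o n C w h1 h2
  have hc3 : cntf f3 C ≤ n - 1 := by
    rw [← hV]
    exact cntf_le1 f3_le (u := ℓ) (by simp [f3, hp2])
  by_cases hul : u = ℓ
  · subst hul
    -- the initiator is the leader (in phase 2)
    have hvl : v ≠ u := huv.symm
    have hbl : (C v).leader = false := hof v hvl
    have hnR1 : ¬ ((C u).leader = true ∧ (C v).leader = true) := by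
      rintro ⟨-, h⟩; rw [hbl] at h; simp at h
    by_cases hm : (C u).mode = (C v).mode
    · -- rule R2 fires
      have hr2 := ciw_R2 n (C u) (C v) hnR1 ⟨hl, hp2, hm⟩
      obtain ⟨x, hxu, hxm⟩ := hex
      have e_u : fmis (C u).mode (C u) = 0 := by simp [fmis]
      have e_x : fmis (C u).mode (C x) = 0 := by simp [fmis, hxm]
      have hb2 : cntf (fmis (C u).mode) C ≤ n - 2 := by
        rw [← hV]; exact cntf_le2 (fmis_le _) hxu e_x e_u
      have hcnt_le : (C u).cnt ≤ n - 2 := by rw [hcm]; exact hb2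
      have hminr : min n ((C u).cnt + 1) = (C u).cnt + 1 := Nat.min_eq_right (by omega)
      by_cases hfin : (C u).cnt + 1 = n - 1
      · -- the count is complete: the leader moves to phase 3
        have hu' : C' u = ⟨true, 3, !(C u).mode, 1⟩ := by
          rw [hC', step_u, hr2, if_pos (by rw [hminr]; exact hfin)]
        have hv' : C' v = ⟨(C v).leader, (C v).phase, !(C v).mode, (C v).cnt⟩ := by
          rw [hC', step_v n C huv, hr2, if_pos (by rw [hminr]; exact hfin)]
        have hmis_eq : cntf (fmis (C u).mode) C = n - 2 := by omega
        have hmis_all : ∀ w, w ≠ u → w ≠ x → (C w).mode ≠ (C u).mode := by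
          intro w hwu hwx hcon
          have e_w : fmis (C u).mode (C w) = 0 := by simp [fmis, hcon]
          have h3n : 3 ≤ n := by
            rw [← hV]; exact three_le_card hwu hwx (Ne.symm hxu)
          have := cntf_le3 (fmis_le _) hwu hwx (Ne.symm hxu) e_w e_u e_x
          rw [hV] at this
          omega
        have hvx : v = x := by
          by_contra hvx
          exact hmis_all v hvl hvx hm.symm
        subst hvx
        -- after the step every agent has mode !m
        have hallm : ∀ w, (C' w).mode = !(C u).mode := by
          intro w
          by_cases h1 : w = u
          · rw [h1, hu']
          · by_cases h2 : w = v
            · rw [h2, hv']; rw [← hm]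
            · rw [ho w h1 h2]; exact bool_ne (hmis_all w h1 h2)
        have hph_o : ∀ w, w ≠ u → (C' w).phase = (C w).phase := by
          intro w h1
          by_cases h2 : w = v
          · rw [h2, hv']
          · rw [ho w h1 h2]
        have hcnt_o : ∀ w, w ≠ u → (C' w).cnt = (C w).cnt := by
          intro w h1
          by_cases h2 : w = v
          · rw [h2, hv']
          · rw [ho w h1 h2]
        have hld_o : ∀ w, w ≠ u → (C' w).leader = (C w).leader := by
          intro w h1
          by_cases h2 : w = v
          · rw [h2, hv']
          · rw [ho w h1 h2]
        have hcup3 := cntf_update huv ho f3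
        have e1 : f3 (C u) = 0 := by simp [f3, hp2]
        have e2 : f3 (C' u) = 1 := by simp [f3, hu']
        have e3 : f3 (C' v) = f3 (C v) := by simp [f3, hv']
        have hc3' : cntf f3 C' = cntf f3 C + 1 := by omega
        have hcupt := cntf_update huv ho ftok
        have t1 : ftok (C u) = 0 := by simp [ftok, hp2]
        have t2 : ftok (C' u) = 1 := by simp [ftok, hu']
        have t3 : ftok (C' v) = ftok (C v) := by simp [ftok, hv']
        have htk' : cntf ftok C' = cntf ftok C + 1 := by omega
        have hmono : ∀ w, (C w).phase ≤ (C' w).phase := by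
          intro w
          by_cases h1 : w = u
          · rw [h1, hu', hp2]; exact by norm_num
          · rw [hph_o w h1]
        by_cases hex1 : ∃ y, (C y).phase = 1
        · -- some phase-1 agent remains: stage C
          obtain ⟨y, hy⟩ := hex1
          have hyu : y ≠ u := by intro h; rw [h, hp2] at hy; omega
          refine ⟨hmono, Or.inr (Or.inl ⟨⟨u, ?_, ?_, ?_, ?_, ?_, ?_, ?_, ?_⟩, by omega⟩)⟩
          · rw [hu']
          · rw [hu']
          · intro w h1; rw [hld_o w h1]; exact hof w h1
          · intro w h1; rw [hph_o w h1]; exact hop w h1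
          · intro w h1
            have hwu : w ≠ u := by
              intro h; rw [h, hu'] at h1; simp at h1
            rw [hcnt_o w hwu]
            exact h10 w (by rw [← hph_o w hwu]; exact h1)
          · intro w; rw [hallm w, hallm u]
          · omega
          · exact ⟨y, by rw [hph_o y hyu]; exact hy⟩
        · -- no phase-1 agent: all agents now in phase 3, stage D
          push_neg at hex1
          have hall3 : ∀ w, w ≠ u → (C w).phase = 3 := by
            intro w h1
            rcases hop w h1 with h | h
            · exact absurd h (hex1 w)
            · exact h
          have hall3' : ∀ w, (C' w).phase = 3 := by
            intro w
            by_cases h1 : w = u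
            · rw [h1, hu']
            · rw [hph_o w h1]; exact hall3 w h1
          have hc3eq : cntf f3 C = n - 1 := by
            rw [← hV]
            exact cntf_eq_pred (u := u) (by simp [f3, hp2])
              (fun w hw => by simp [f3, hall3 w hw])
          -- total count is n
          have htotC' : cntf fcnt C' = n := by
            have heq : cntf fcnt C' = cntf ftok C' :=
              cntf_congr' (fun w => by simp [fcnt, ftok, hall3' w])
            omega
          have hnL' : cntf fL C' ≤ 1 := by
            have hsp := cntf_split1 (u := u) fL C'
            have hz : ∑ w ∈ univ.erase u, fL (C' w) = 0 := by
              apply Finset.sum_eq_zero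
              intro w hw
              have hwu := Finset.ne_of_mem_erase hw
              simp [fL, hld_o w hwu, hof w hwu]
            have : fL (C' u) ≤ 1 := fL_le _
            omega
          have hpos : ∃ z w, z ≠ w ∧ 0 < (C' z).cnt ∧ 0 < (C' w).cnt := by
            have hsp := cntf_split1 (u := u) fcnt C'
            have hcu : fcnt (C' u) = 1 := by simp [fcnt, hu']
            have hnz : ∑ w ∈ univ.erase u, fcnt (C' w) ≠ 0 := by omega
            obtain ⟨z, hz, hz0⟩ := Finset.exists_ne_zero_of_sum_ne_zero hnz
            refine ⟨u, z, (Finset.ne_of_mem_erase hz).symm, ?_, ?_⟩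
            · rw [hu']; norm_num
            · unfold fcnt at hz0; omega
          exact ⟨hmono, Or.inr (Or.inr ⟨⟨hall3', hnL', htotC', hpos⟩, hc3eq⟩)⟩
      · -- count not complete: stay in stage B
        have hu' : C' u = ⟨true, 2, (C u).mode, (C u).cnt + 1⟩ := by
          rw [hC', step_u, hr2, if_neg (by rw [hminr]; exact hfin), hminr, hp2]
        have hv' : C' v = ⟨(C v).leader, (C v).phase, !(C v).mode, (C v).cnt⟩ := by
          rw [hC', step_v n C huv, hr2, if_neg (by rw [hminr]; exact hfin)]
        have hph_u : (C' u).phase = (C u).phase := by rw [hu', hp2]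
        have hph_o : ∀ w, (C' w).phase = (C w).phase := by
          intro w
          by_cases h1 : w = u
          · rw [h1, hph_u]
          · by_cases h2 : w = v
            · rw [h2, hv']
            · rw [ho w h1 h2]
        have hcnt_o : ∀ w, w ≠ u → (C' w).cnt = (C w).cnt := by
          intro w h1
          by_cases h2 : w = v
          · rw [h2, hv']
          · rw [ho w h1 h2]
        have hld_o : ∀ w, (C' w).leader = (C w).leader := by
          intro w
          by_cases h1 : w = u
          · rw [h1, hu', hl]
          · by_cases h2 : w = v
            · rw [h2, hv']
            · rw [ho w h1 h2]
        have hmode_u : (C' u).mode = (C u).mode := by rw [hu']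
        have hmode_o : ∀ w, w ≠ v → (C' w).mode = (C w).mode := by
          intro w h2
          by_cases h1 : w = u
          · rw [h1, hmode_u]
          · rw [ho w h1 h2]
        -- the new mismatch count
        have hcup := cntf_update huv ho (fmis (C u).mode)
        have e1 : fmis (C u).mode (C u) = 0 := by simp [fmis]
        have e2 : fmis (C u).mode (C v) = 0 := by simp [fmis, hm]
        have e3 : fmis (C u).mode (C' u) = 0 := by simp [fmis, hu']
        have e4 : fmis (C u).mode (C' v) = 1 := by
          have : (C' v).mode = !(C u).mode := by rw [hv', ← hm]
          simp [fmis, this]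
        have hmis' : cntf (fmis (C u).mode) C' = cntf (fmis (C u).mode) C + 1 := by omega
        have hc3' : cntf f3 C' = cntf f3 C :=
          cntf_congr (fun w => by unfold f3; rw [hph_o w])
        have htk' : cntf ftok C' = cntf ftok C := by
          have hcupt := cntf_update huv ho ftok
          have t1 : ftok (C' u) = 0 := by simp [ftok, hu']
          have t2 : ftok (C u) = 0 := by simp [ftok, hp2]
          have t3 : ftok (C' v) = ftok (C v) := by simp [ftok, hv']
          omega
        have hex' : ∃ z, z ≠ u ∧ (C' z).mode = (C' u).mode := by
          by_contra hcon
          push_neg at hcon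
          have : cntf (fmis (C u).mode) C' = n - 1 := by
            rw [← hV]
            refine cntf_eq_pred (u := u) e3 (fun w hw => ?_)
            have := hcon w hw
            rw [hmode_u] at this
            simp [fmis, this]
          omega
        refine ⟨fun w => by rw [hph_o w], Or.inl ⟨⟨?_, ?_, ?_, ?_, ?_, ?_, ?_, ?_⟩, hc3', hld_o, hmode_u, ?_⟩⟩
        · rw [hu']
        · rw [hu']
        · intro w h1; rw [hld_o w]; exact hof w h1
        · intro w h1; rw [hph_o w]; exact hop w h1
        · intro w h1
          rw [hph_o w] at h1
          have hwu : w ≠ u := by intro h; rw [h, hp2] at h1; omega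
          rw [hcnt_o w hwu]
          exact h10 w h1
        · rw [hu', hmis', ← hcm]
        · rw [htk', hc3', htk]
        · obtain ⟨z, hz1, hz2⟩ := hex'
          exact ⟨z, hz1, by rw [hz2, hmode_u]⟩
        · intro w hw
          by_cases h2 : w = v
          · rw [h2] at hw; exact absurd hm.symm hw
          · rw [hmode_o w h2]; exact hw
    · -- leader and responder have different modes: no rule applies
      have hid : ciwPair n (C u) (C v) = (C u, C v) := by
        apply ciw_none
        · exact hnR1
        · rintro ⟨-, -, h⟩; exact hm h
        · rintro ⟨-, h, -⟩; rw [hp2] at h; omega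
        · rintro ⟨h, -⟩; rw [hp2] at h; omega
        · rw [hp2]; omega
      rw [hC', step_id hid]
      exact ⟨fun w => le_refl _,
        Or.inl ⟨⟨hl, hp2, hof, hop, h10, hcm, htk, hex⟩, rfl, fun w => rfl, rfl,
          fun w h => h⟩⟩
  · -- the initiator is not the leader
    have hal : (C u).leader = false := hof u hul
    have hnR1 : ¬ ((C u).leader = true ∧ (C v).leader = true) := by
      rintro ⟨h, -⟩; rw [hal] at h; simp at h
    have hnR2 : ¬ ((C u).leader = true ∧ (C u).phase = 2 ∧ (C u).mode = (C v).mode) := by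
      rintro ⟨h, -⟩; rw [hal] at h; simp at h
    have hnR3 : ¬ ((C u).leader = true ∧ (C u).phase = 3 ∧ (C v).phase = 1) := by
      rintro ⟨h, -⟩; rw [hal] at h; simp at h
    by_cases hr4 : (C u).phase = 3 ∧ (C v).phase = 3 ∧ 0 < (C u).cnt ∧ 0 < (C v).cnt
    · -- rule R4 fires between two followers
      obtain ⟨hu3, hv3, hcu, hcv⟩ := hr4
      have hr4' := ciw_R4 n (C u) (C v) hnR1 hnR2 hnR3 ⟨hu3, hv3, hcu, hcv⟩
      have htb : ftok (C u) + ftok (C v) ≤ cntf ftok C := pair_le_cntf huv ftok C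
      have tu : ftok (C u) = (C u).cnt := by simp [ftok, hu3]
      have tv : ftok (C v) = (C v).cnt := by simp [ftok, hv3]
      have hlt : (C u).cnt + (C v).cnt < n := by omega
      have hmin : min n ((C u).cnt + (C v).cnt) = (C u).cnt + (C v).cnt :=
        Nat.min_eq_right (by omega)
      have hu' : C' u = ⟨(C u).leader, (C u).phase, (C u).mode, (C u).cnt + (C v).cnt⟩ := by
        rw [hC', step_u, hr4', if_neg (by omega), hmin]
      have hv' : C' v = ⟨(C v).leader, (C v).phase, (C v).mode, 0⟩ := by
        rw [hC', step_v n C huv, hr4', if_neg (by omega)]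
      have hph_o : ∀ w, (C' w).phase = (C w).phase := by
        intro w
        by_cases h1 : w = u
        · rw [h1, hu']
        · by_cases h2 : w = v
          · rw [h2, hv']
          · rw [ho w h1 h2]
      have hld_o : ∀ w, (C' w).leader = (C w).leader := by
        intro w
        by_cases h1 : w = u
        · rw [h1, hu']
        · by_cases h2 : w = v
          · rw [h2, hv']
          · rw [ho w h1 h2]
      have hmo_o : ∀ w, (C' w).mode = (C w).mode := by
        intro w
        by_cases h1 : w = u
        · rw [h1, hu']
        · by_cases h2 : w = v
          · rw [h2, hv']
          · rw [ho w h1 h2]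
      have hlu : ℓ ≠ u := Ne.symm hul
      have hlv : ℓ ≠ v := by
        intro h; rw [← h] at hv3; rw [hp2] at hv3; omega
      have hCl : C' ℓ = C ℓ := ho ℓ hlu hlv
      have hc3' : cntf f3 C' = cntf f3 C :=
        cntf_congr (fun w => by unfold f3; rw [hph_o w])
      have hmis' : cntf (fmis (C ℓ).mode) C' = cntf (fmis (C ℓ).mode) C :=
        cntf_congr (fun w => by unfold fmis; rw [hmo_o w])
      have htk' : cntf ftok C' = cntf ftok C := by
        have hcupt := cntf_update huv ho ftok
        have t1 : ftok (C' u) = (C u).cnt + (C v).cnt := by simp [ftok, hu', hu3]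
        have t2 : ftok (C' v) = 0 := by simp [ftok, hv']
        omega
      refine ⟨fun w => by rw [hph_o w], Or.inl ⟨⟨?_, ?_, ?_, ?_, ?_, ?_, ?_, ?_⟩, hc3',
        hld_o, by rw [hCl], fun w hw => by rw [hmo_o w]; exact hw⟩⟩
      · rw [hCl]; exact hl
      · rw [hCl]; exact hp2
      · intro w h1; rw [hld_o w]; exact hof w h1
      · intro w h1; rw [hph_o w]; exact hop w h1
      · intro w h1
        rw [hph_o w] at h1
        have hwu : w ≠ u := by intro h; rw [h, hu3] at h1; omega
        have hwv : w ≠ v := by intro h; rw [h, hv3] at h1; omega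
        rw [ho w hwu hwv]
        exact h10 w h1
      · rw [hCl, hmis', hcm]
      · rw [htk', hc3', htk]
      · obtain ⟨x, hx1, hx2⟩ := hex
        exact ⟨x, hx1, by rw [hmo_o x, hCl]; exact hx2⟩
    · -- no rule applies
      have hnR5 : ¬ (C u).phase = 4 := by
        rcases hop u hul with h | h <;> omega
      have hid : ciwPair n (C u) (C v) = (C u, C v) :=
        ciw_none n (C u) (C v) hnR1 hnR2 hnR3 hr4 hnR5
      rw [hC', step_id hid]
      exact ⟨fun w => le_refl _,
        Or.inl ⟨⟨hl, hp2, hof, hop, h10, hcm, htk, hex⟩, rfl, fun w => rfl, rfl,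
          fun w h => h⟩⟩


/-! ### Step lemma for Stage C -/

lemma stepC {n : ℕ} {C : V → StW} {u v ℓ : V} (hn : 2 ≤ n) (hV : Fintype.card V = n)
    (huv : u ≠ v) (hC : StC n ℓ C) :
    (∀ w, (C w).phase ≤ (stepFn (ciwδ n) C (u, v) w).phase) ∧
    ((StC n ℓ (stepFn (ciwδ n) C (u, v)) ∧
        cntf f3 (stepFn (ciwδ n) C (u, v)) = cntf f3 C ∧
        (∀ w, (stepFn (ciwδ n) C (u, v) w).leader = (C w).leader))
      ∨ ((∃ ℓ', StB n ℓ' (stepFn (ciwδ n) C (u, v))) ∧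
          cntf f3 (stepFn (ciwδ n) C (u, v)) = cntf f3 C)) := by
  obtain ⟨hl, hp3, hof, hop, h10, hmo, htk, hex⟩ := hC
  set C' := stepFn (ciwδ n) C (u, v) with hC'
  have ho : ∀ w, w ≠ u → w ≠ v → C' w = C w := fun w h1 h2 => step_o n C w h1 h2
  have hc3 : cntf f3 C ≤ n - 1 := by
    obtain ⟨x, hx⟩ := hex
    rw [← hV]
    exact cntf_le1 f3_le (u := x) (by simp [f3, hx])
  by_cases hul : u = ℓ
  · subst hul
    have hvl : v ≠ u := huv.symm
    have hbl : (C v).leader = false := hof v hvl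
    have hnR1 : ¬ ((C u).leader = true ∧ (C v).leader = true) := by
      rintro ⟨-, h⟩; rw [hbl] at h; simp at h
    have hnR2 : ¬ ((C u).leader = true ∧ (C u).phase = 2 ∧ (C u).mode = (C v).mode) := by
      rintro ⟨-, h, -⟩; rw [hp3] at h; omega
    by_cases hb1 : (C v).phase = 1
    · -- rule R3 fires: leadership is handed over
      have hr3 := ciw_R3 n (C u) (C v) hnR1 hnR2 ⟨hl, hp3, hb1⟩
      have hu' : C' u = ⟨false, (C u).phase, (C u).mode, (C u).cnt⟩ := by
        rw [hC', step_u, hr3]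
      have hv' : C' v = ⟨true, 2, (C v).mode, (C v).cnt⟩ := by
        rw [hC', step_v n C huv, hr3]
      have hmode_o : ∀ w, (C' w).mode = (C w).mode := by
        intro w
        by_cases h1 : w = u
        · rw [h1, hu']
        · by_cases h2 : w = v
          · rw [h2, hv']
          · rw [ho w h1 h2]
      have hph_u : (C' u).phase = (C u).phase := by rw [hu']
      have hph_oo : ∀ w, w ≠ v → (C' w).phase = (C w).phase := by
        intro w h2
        by_cases h1 : w = u
        · rw [h1, hph_u]
        · rw [ho w h1 h2]
      have hcnt_o : ∀ w, (C' w).cnt = (C w).cnt := by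
        intro w
        by_cases h1 : w = u
        · rw [h1, hu']
        · by_cases h2 : w = v
          · rw [h2, hv']
          · rw [ho w h1 h2]
      have hf3_o : ∀ w, f3 (C' w) = f3 (C w) := by
        intro w
        by_cases h2 : w = v
        · rw [h2]; simp [f3, hv', hb1]
        · unfold f3; rw [hph_oo w h2]
      have hftok_o : ∀ w, ftok (C' w) = ftok (C w) := by
        intro w
        by_cases h2 : w = v
        · rw [h2]; simp [ftok, hv', hb1]
        · unfold ftok; rw [hph_oo w h2, hcnt_o w]
      have hc3' : cntf f3 C' = cntf f3 C := cntf_congr hf3_o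
      refine ⟨?_, Or.inr ⟨⟨v, ?_, ?_, ?_, ?_, ?_, ?_, ?_, ?_⟩, hc3'⟩⟩
      · intro w
        by_cases h2 : w = v
        · rw [h2, hv', hb1]; exact one_le_two
        · rw [hph_oo w h2]
      · rw [hv']
      · rw [hv']
      · intro w h2
        by_cases h1 : w = u
        · rw [h1, hu']
        · rw [ho w h1 h2]; exact hof w h1
      · intro w h2
        by_cases h1 : w = u
        · rw [h1, hph_u, hp3]; exact Or.inr rfl
        · rw [ho w h1 h2]; exact hop w h1
      · intro w h1
        have hwv : w ≠ v := by
          intro h; rw [h, hv'] at h1; simp at h1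
        rw [hph_oo w hwv] at h1
        rw [hcnt_o w]
        exact h10 w h1
      · have hz : cntf (fmis (C' v).mode) C' = 0 := by
          apply Finset.sum_eq_zero
          intro w _
          have e1 : (C' w).mode = (C u).mode := by rw [hmode_o w]; exact hmo w
          have e2 : (C' v).mode = (C u).mode := by rw [hmode_o v]; exact hmo v
          simp [fmis, e1, e2]
        rw [hz, hv', h10 v hb1]
      · rw [hc3', cntf_congr hftok_o, htk]
      · refine ⟨u, huv, ?_⟩
        rw [hmode_o u, hmode_o v, hmo v]
    · -- responder is a phase-3 follower: possibly rule R4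
      have hv3 : (C v).phase = 3 := by rcases hop v hvl with h | h; exact absurd h hb1; exact h
      have hnR3 : ¬ ((C u).leader = true ∧ (C u).phase = 3 ∧ (C v).phase = 1) := by
        rintro ⟨-, -, h⟩; exact hb1 h
      by_cases hr4 : 0 < (C u).cnt ∧ 0 < (C v).cnt
      · have hr4' := ciw_R4 n (C u) (C v) hnR1 hnR2 hnR3 ⟨hp3, hv3, hr4.1, hr4.2⟩
        have htb : ftok (C u) + ftok (C v) ≤ cntf ftok C := pair_le_cntf huv ftok C
        have tu : ftok (C u) = (C u).cnt := by simp [ftok, hp3]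
        have tv : ftok (C v) = (C v).cnt := by simp [ftok, hv3]
        have hlt : (C u).cnt + (C v).cnt < n := by omega
        have hmin : min n ((C u).cnt + (C v).cnt) = (C u).cnt + (C v).cnt :=
          Nat.min_eq_right (by omega)
        have hu' : C' u = ⟨(C u).leader, (C u).phase, (C u).mode, (C u).cnt + (C v).cnt⟩ := by
          rw [hC', step_u, hr4', if_neg (by omega), hmin]
        have hv' : C' v = ⟨(C v).leader, (C v).phase, (C v).mode, 0⟩ := by
          rw [hC', step_v n C huv, hr4', if_neg (by omega)]
        have hph_o : ∀ w, (C' w).phase = (C w).phase := by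
          intro w
          by_cases h1 : w = u
          · rw [h1, hu']
          · by_cases h2 : w = v
            · rw [h2, hv']
            · rw [ho w h1 h2]
        have hld_o : ∀ w, (C' w).leader = (C w).leader := by
          intro w
          by_cases h1 : w = u
          · rw [h1, hu']
          · by_cases h2 : w = v
            · rw [h2, hv']
            · rw [ho w h1 h2]
        have hmo_o : ∀ w, (C' w).mode = (C w).mode := by
          intro w
          by_cases h1 : w = u
          · rw [h1, hu']
          · by_cases h2 : w = v
            · rw [h2, hv']
            · rw [ho w h1 h2]
        have hc3' : cntf f3 C' = cntf f3 C :=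
          cntf_congr (fun w => by unfold f3; rw [hph_o w])
        have htk' : cntf ftok C' = cntf ftok C := by
          have hcupt := cntf_update huv ho ftok
          have t1 : ftok (C' u) = (C u).cnt + (C v).cnt := by simp [ftok, hu', hp3]
          have t2 : ftok (C' v) = 0 := by simp [ftok, hv']
          omega
        refine ⟨fun w => by rw [hph_o w], Or.inl ⟨⟨?_, ?_, ?_, ?_, ?_, ?_, ?_, ?_⟩, hc3', hld_o⟩⟩
        · rw [hld_o u]; exact hl
        · rw [hph_o u]; exact hp3
        · intro w h1; rw [hld_o w]; exact hof w h1
        · intro w h1; rw [hph_o w]; exact hop w h1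
        · intro w h1
          rw [hph_o w] at h1
          have hwu : w ≠ u := by intro h; rw [h, hp3] at h1; omega
          have hwv : w ≠ v := by intro h; rw [h, hv3] at h1; omega
          rw [ho w hwu hwv]
          exact h10 w h1
        · intro w; rw [hmo_o w, hmo_o u]; exact hmo w
        · rw [htk', hc3', htk]
        · obtain ⟨x, hx⟩ := hex
          have hxu : x ≠ u := by intro h; rw [h, hp3] at hx; omega
          have hxv : x ≠ v := by intro h; rw [h, hv3] at hx; omega
          exact ⟨x, by rw [hph_o x]; exact hx⟩
      · have hnR4 : ¬ ((C u).phase = 3 ∧ (C v).phase = 3 ∧ 0 < (C u).cnt ∧ 0 < (C v).cnt) := by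
          rintro ⟨-, -, h1, h2⟩; exact hr4 ⟨h1, h2⟩
        have hid : ciwPair n (C u) (C v) = (C u, C v) :=
          ciw_none n (C u) (C v) hnR1 hnR2 hnR3 hnR4 (by rw [hp3]; omega)
        rw [hC', step_id hid]
        exact ⟨fun w => le_refl _,
          Or.inl ⟨⟨hl, hp3, hof, hop, h10, hmo, htk, hex⟩, rfl, fun w => rfl⟩⟩
  · -- initiator is a follower
    have hal : (C u).leader = false := hof u hul
    have hnR1 : ¬ ((C u).leader = true ∧ (C v).leader = true) := by
      rintro ⟨h, -⟩; rw [hal] at h; simp at h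
    have hnR2 : ¬ ((C u).leader = true ∧ (C u).phase = 2 ∧ (C u).mode = (C v).mode) := by
      rintro ⟨h, -⟩; rw [hal] at h; simp at h
    have hnR3 : ¬ ((C u).leader = true ∧ (C u).phase = 3 ∧ (C v).phase = 1) := by
      rintro ⟨h, -⟩; rw [hal] at h; simp at h
    by_cases hr4 : (C u).phase = 3 ∧ (C v).phase = 3 ∧ 0 < (C u).cnt ∧ 0 < (C v).cnt
    · obtain ⟨hu3, hv3, hcu, hcv⟩ := hr4
      have hr4' := ciw_R4 n (C u) (C v) hnR1 hnR2 hnR3 ⟨hu3, hv3, hcu, hcv⟩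
      have htb : ftok (C u) + ftok (C v) ≤ cntf ftok C := pair_le_cntf huv ftok C
      have tu : ftok (C u) = (C u).cnt := by simp [ftok, hu3]
      have tv : ftok (C v) = (C v).cnt := by simp [ftok, hv3]
      have hlt : (C u).cnt + (C v).cnt < n := by omega
      have hmin : min n ((C u).cnt + (C v).cnt) = (C u).cnt + (C v).cnt :=
        Nat.min_eq_right (by omega)
      have hu' : C' u = ⟨(C u).leader, (C u).phase, (C u).mode, (C u).cnt + (C v).cnt⟩ := by
        rw [hC', step_u, hr4', if_neg (by omega), hmin]
      have hv' : C' v = ⟨(C v).leader, (C v).phase, (C v).mode, 0⟩ := by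
        rw [hC', step_v n C huv, hr4', if_neg (by omega)]
      have hph_o : ∀ w, (C' w).phase = (C w).phase := by
        intro w
        by_cases h1 : w = u
        · rw [h1, hu']
        · by_cases h2 : w = v
          · rw [h2, hv']
          · rw [ho w h1 h2]
      have hld_o : ∀ w, (C' w).leader = (C w).leader := by
        intro w
        by_cases h1 : w = u
        · rw [h1, hu']
        · by_cases h2 : w = v
          · rw [h2, hv']
          · rw [ho w h1 h2]
      have hmo_o : ∀ w, (C' w).mode = (C w).mode := by
        intro w
        by_cases h1 : w = u
        · rw [h1, hu']
        · by_cases h2 : w = v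
          · rw [h2, hv']
          · rw [ho w h1 h2]
      have hc3' : cntf f3 C' = cntf f3 C :=
        cntf_congr (fun w => by unfold f3; rw [hph_o w])
      have htk' : cntf ftok C' = cntf ftok C := by
        have hcupt := cntf_update huv ho ftok
        have t1 : ftok (C' u) = (C u).cnt + (C v).cnt := by simp [ftok, hu', hu3]
        have t2 : ftok (C' v) = 0 := by simp [ftok, hv']
        omega
      refine ⟨fun w => by rw [hph_o w], Or.inl ⟨⟨?_, ?_, ?_, ?_, ?_, ?_, ?_, ?_⟩, hc3', hld_o⟩⟩
      · rw [hld_o ℓ]; exact hl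
      · rw [hph_o ℓ]; exact hp3
      · intro w h1; rw [hld_o w]; exact hof w h1
      · intro w h1; rw [hph_o w]; exact hop w h1
      · intro w h1
        rw [hph_o w] at h1
        have hwu : w ≠ u := by intro h; rw [h, hu3] at h1; omega
        have hwv : w ≠ v := by intro h; rw [h, hv3] at h1; omega
        rw [ho w hwu hwv]
        exact h10 w h1
      · intro w; rw [hmo_o w, hmo_o ℓ]; exact hmo w
      · rw [htk', hc3', htk]
      · obtain ⟨x, hx⟩ := hex
        have hxu : x ≠ u := by intro h; rw [h, hu3] at hx; omega
        have hxv : x ≠ v := by intro h; rw [h, hv3] at hx; omega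
        exact ⟨x, by rw [hph_o x]; exact hx⟩
    · have hnR5 : ¬ (C u).phase = 4 := by
        by_cases h1 : u = ℓ
        · exact absurd h1 hul
        · rcases hop u h1 with h | h <;> omega
      have hid : ciwPair n (C u) (C v) = (C u, C v) :=
        ciw_none n (C u) (C v) hnR1 hnR2 hnR3 hr4 hnR5
      rw [hC', step_id hid]
      exact ⟨fun w => le_refl _,
        Or.inl ⟨⟨hl, hp3, hof, hop, h10, hmo, htk, hex⟩, rfl, fun w => rfl⟩⟩

/-! ### Step lemma for Stage D -/

lemma stepD {n : ℕ} {C : V → StW} {u v : V} (hn : 2 ≤ n) (hV : Fintype.card V = n)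
    (huv : u ≠ v) (hD : StD n C) :
    (∀ w, (C w).phase ≤ (stepFn (ciwδ n) C (u, v) w).phase) ∧
    ((StD n (stepFn (ciwδ n) C (u, v)) ∧
        (∀ w, 0 < (stepFn (ciwδ n) C (u, v) w).cnt → 0 < (C w).cnt))
      ∨ StE n (stepFn (ciwδ n) C (u, v))) := by
  obtain ⟨h3, hnL, htot, hpos⟩ := hD
  set C' := stepFn (ciwδ n) C (u, v) with hC'
  have ho : ∀ w, w ≠ u → w ≠ v → C' w = C w := fun w h1 h2 => step_o n C w h1 h2
  have hnR1 : ¬ ((C u).leader = true ∧ (C v).leader = true) := by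
    rintro ⟨h1, h2⟩
    have := pair_le_cntf huv fL C
    have e1 : fL (C u) = 1 := by simp [fL, h1]
    have e2 : fL (C v) = 1 := by simp [fL, h2]
    omega
  have hnR2 : ¬ ((C u).leader = true ∧ (C u).phase = 2 ∧ (C u).mode = (C v).mode) := by
    rintro ⟨-, h, -⟩; rw [h3 u] at h; omega
  have hnR3 : ¬ ((C u).leader = true ∧ (C u).phase = 3 ∧ (C v).phase = 1) := by
    rintro ⟨-, -, h⟩; rw [h3 v] at h; omega
  by_cases hr4 : 0 < (C u).cnt ∧ 0 < (C v).cnt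
  · have hr4' := ciw_R4 n (C u) (C v) hnR1 hnR2 hnR3 ⟨h3 u, h3 v, hr4.1, hr4.2⟩
    have hle : (C u).cnt + (C v).cnt ≤ n := by
      have := pair_le_cntf huv fcnt C
      have e1 : fcnt (C u) = (C u).cnt := rfl
      have e2 : fcnt (C v) = (C v).cnt := rfl
      omega
    have hmin : min n ((C u).cnt + (C v).cnt) = (C u).cnt + (C v).cnt :=
      Nat.min_eq_right hle
    by_cases hc : (C u).cnt + (C v).cnt = n
    · -- the merge completes: phase 4 appears
      have hu' : C' u = ⟨(C u).leader, 4, (C u).mode, min n ((C u).cnt + (C v).cnt)⟩ := by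
        rw [hC', step_u, hr4', if_pos (by omega)]
      have hv' : C' v = ⟨(C v).leader, (C v).phase, (C v).mode, 0⟩ := by
        rw [hC', step_v n C huv, hr4', if_pos (by omega)]
      have hld_o : ∀ w, (C' w).leader = (C w).leader := by
        intro w
        by_cases h1 : w = u
        · rw [h1, hu']
        · by_cases h2 : w = v
          · rw [h2, hv']
          · rw [ho w h1 h2]
      refine ⟨?_, Or.inr ⟨?_, ⟨u, by rw [hu']⟩, ?_⟩⟩
      · intro w
        by_cases h1 : w = u
        · rw [h1, hu', h3 u]; norm_num
        · by_cases h2 : w = v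
          · rw [h2, hv']
          · rw [ho w h1 h2]
      · intro w
        by_cases h1 : w = u
        · rw [h1, hu']; exact Or.inr rfl
        · by_cases h2 : w = v
          · rw [h2, hv']; exact Or.inl (h3 v)
          · rw [ho w h1 h2]; exact Or.inl (h3 w)
      · have hL' : cntf fL C' = cntf fL C :=
          cntf_congr (fun w => by unfold fL; rw [hld_o w])
        rw [hL']; exact hnL
    · -- the merge does not complete: stay in stage D
      have hu' : C' u = ⟨(C u).leader, (C u).phase, (C u).mode, (C u).cnt + (C v).cnt⟩ := by
        rw [hC', step_u, hr4', if_neg (by omega), hmin]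
      have hv' : C' v = ⟨(C v).leader, (C v).phase, (C v).mode, 0⟩ := by
        rw [hC', step_v n C huv, hr4', if_neg (by omega)]
      have hph_o : ∀ w, (C' w).phase = (C w).phase := by
        intro w
        by_cases h1 : w = u
        · rw [h1, hu']
        · by_cases h2 : w = v
          · rw [h2, hv']
          · rw [ho w h1 h2]
      have hld_o : ∀ w, (C' w).leader = (C w).leader := by
        intro w
        by_cases h1 : w = u
        · rw [h1, hu']
        · by_cases h2 : w = v
          · rw [h2, hv']
          · rw [ho w h1 h2]
      have htot' : cntf fcnt C' = n := by
        have hcup := cntf_update huv ho fcnt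
        have e1 : fcnt (C' u) = (C u).cnt + (C v).cnt := by simp [fcnt, hu']
        have e2 : fcnt (C' v) = 0 := by simp [fcnt, hv']
        have e3 : fcnt (C u) = (C u).cnt := rfl
        have e4 : fcnt (C v) = (C v).cnt := rfl
        omega
      have hpos' : ∃ z w, z ≠ w ∧ 0 < (C' z).cnt ∧ 0 < (C' w).cnt := by
        have hsp := cntf_split1 (u := u) fcnt C'
        have hcu : fcnt (C' u) = (C u).cnt + (C v).cnt := by simp [fcnt, hu']
        have hnz : ∑ w ∈ univ.erase u, fcnt (C' w) ≠ 0 := by omega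
        obtain ⟨z, hz, hz0⟩ := Finset.exists_ne_zero_of_sum_ne_zero hnz
        refine ⟨u, z, (Finset.ne_of_mem_erase hz).symm, ?_, ?_⟩
        · rw [hu']; simp; omega
        · unfold fcnt at hz0; omega
      refine ⟨fun w => by rw [hph_o w], Or.inl ⟨⟨fun w => by rw [hph_o w]; exact h3 w, ?_,
        htot', hpos'⟩, ?_⟩⟩
      · have hL' : cntf fL C' = cntf fL C :=
          cntf_congr (fun w => by unfold fL; rw [hld_o w])
        rw [hL']; exact hnL
      · intro w hw
        by_cases h1 : w = u
        · rw [h1]; exact hr4.1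
        · by_cases h2 : w = v
          · rw [h2, hv'] at hw; simp at hw
          · rw [ho w h1 h2] at hw; exact hw
  · have hnR4 : ¬ ((C u).phase = 3 ∧ (C v).phase = 3 ∧ 0 < (C u).cnt ∧ 0 < (C v).cnt) := by
      rintro ⟨-, -, h1, h2⟩; exact hr4 ⟨h1, h2⟩
    have hid : ciwPair n (C u) (C v) = (C u, C v) :=
      ciw_none n (C u) (C v) hnR1 hnR2 hnR3 hnR4 (by rw [h3 u]; omega)
    rw [hC', step_id hid]
    exact ⟨fun w => le_refl _, Or.inl ⟨⟨h3, hnL, htot, hpos⟩, fun w h => h⟩⟩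

/-! ### Step lemma for Stage E -/

lemma stepE {n : ℕ} {C : V → StW} {u v : V} (hn : 2 ≤ n) (hV : Fintype.card V = n)
    (huv : u ≠ v) (hE : StE n C) :
    (∀ w, (C w).phase ≤ (stepFn (ciwδ n) C (u, v) w).phase) ∧
    StE n (stepFn (ciwδ n) C (u, v)) := by
  obtain ⟨h34, ⟨y, hy⟩, hnL⟩ := hE
  set C' := stepFn (ciwδ n) C (u, v) with hC'
  have ho : ∀ w, w ≠ u → w ≠ v → C' w = C w := fun w h1 h2 => step_o n C w h1 h2
  have hnR1 : ¬ ((C u).leader = true ∧ (C v).leader = true) := by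
    rintro ⟨h1, h2⟩
    have := pair_le_cntf huv fL C
    have e1 : fL (C u) = 1 := by simp [fL, h1]
    have e2 : fL (C v) = 1 := by simp [fL, h2]
    omega
  have hnR2 : ¬ ((C u).leader = true ∧ (C u).phase = 2 ∧ (C u).mode = (C v).mode) := by
    rintro ⟨-, h, -⟩; rcases h34 u with h1 | h1 <;> omega
  have hnR3 : ¬ ((C u).leader = true ∧ (C u).phase = 3 ∧ (C v).phase = 1) := by
    rintro ⟨-, -, h⟩; rcases h34 v with h1 | h1 <;> omega
  by_cases hr4 : (C u).phase = 3 ∧ (C v).phase = 3 ∧ 0 < (C u).cnt ∧ 0 < (C v).cnt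
  · have hr4' := ciw_R4 n (C u) (C v) hnR1 hnR2 hnR3 hr4
    have hyu : y ≠ u := by intro h; rw [h, hr4.1] at hy; omega
    have hyv : y ≠ v := by intro h; rw [h, hr4.2.1] at hy; omega
    by_cases hc : min n ((C u).cnt + (C v).cnt) = n
    · have hu' : C' u = ⟨(C u).leader, 4, (C u).mode, min n ((C u).cnt + (C v).cnt)⟩ := by
        rw [hC', step_u, hr4', if_pos hc]
      have hv' : C' v = ⟨(C v).leader, (C v).phase, (C v).mode, 0⟩ := by
        rw [hC', step_v n C huv, hr4', if_pos hc]
      have hld_o : ∀ w, (C' w).leader = (C w).leader := by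
        intro w
        by_cases h1 : w = u
        · rw [h1, hu']
        · by_cases h2 : w = v
          · rw [h2, hv']
          · rw [ho w h1 h2]
      refine ⟨?_, ?_, ⟨u, by rw [hu']⟩, ?_⟩
      · intro w
        by_cases h1 : w = u
        · rw [h1, hu', hr4.1]; norm_num
        · by_cases h2 : w = v
          · rw [h2, hv']
          · rw [ho w h1 h2]
      · intro w
        by_cases h1 : w = u
        · rw [h1, hu']; exact Or.inr rfl
        · by_cases h2 : w = v
          · rw [h2, hv']; exact Or.inl hr4.2.1
          · rw [ho w h1 h2]; exact h34 w
      · have hL' : cntf fL C' = cntf fL C :=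
          cntf_congr (fun w => by unfold fL; rw [hld_o w])
        rw [hL']; exact hnL
    · have hu' : C' u = ⟨(C u).leader, (C u).phase, (C u).mode, min n ((C u).cnt + (C v).cnt)⟩ := by
        rw [hC', step_u, hr4', if_neg hc]
      have hv' : C' v = ⟨(C v).leader, (C v).phase, (C v).mode, 0⟩ := by
        rw [hC', step_v n C huv, hr4', if_neg hc]
      have hld_o : ∀ w, (C' w).leader = (C w).leader := by
        intro w
        by_cases h1 : w = u
        · rw [h1, hu']
        · by_cases h2 : w = v
          · rw [h2, hv']
          · rw [ho w h1 h2]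
      have hph_o : ∀ w, (C' w).phase = (C w).phase := by
        intro w
        by_cases h1 : w = u
        · rw [h1, hu']
        · by_cases h2 : w = v
          · rw [h2, hv']
          · rw [ho w h1 h2]
      refine ⟨fun w => by rw [hph_o w], fun w => by rw [hph_o w]; exact h34 w,
        ⟨y, by rw [hph_o y]; exact hy⟩, ?_⟩
      have hL' : cntf fL C' = cntf fL C :=
        cntf_congr (fun w => by unfold fL; rw [hld_o w])
      rw [hL']; exact hnL
  · by_cases hr5 : (C u).phase = 4
    · have hr5' := ciw_R5 n (C u) (C v) hnR1 hnR2 hnR3 hr4 hr5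
      have hu' : C' u = C u := by rw [hC', step_u, hr5']
      have hv' : C' v = ⟨(C v).leader, 4, (C v).mode, (C v).cnt⟩ := by
        rw [hC', step_v n C huv, hr5']
      have hld_o : ∀ w, (C' w).leader = (C w).leader := by
        intro w
        by_cases h1 : w = u
        · rw [h1, hu']
        · by_cases h2 : w = v
          · rw [h2, hv']
          · rw [ho w h1 h2]
      refine ⟨?_, ?_, ⟨u, by rw [hu']; exact hr5⟩, ?_⟩
      · intro w
        by_cases h1 : w = u
        · rw [h1, hu']
        · by_cases h2 : w = v
          · rw [h2, hv']
            have : (C v).phase ≤ 4 := by rcases h34 v with h | h <;> omega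
            simpa using this
          · rw [ho w h1 h2]
      · intro w
        by_cases h1 : w = u
        · rw [h1, hu']; exact h34 u
        · by_cases h2 : w = v
          · rw [h2, hv']; exact Or.inr rfl
          · rw [ho w h1 h2]; exact h34 w
      · have hL' : cntf fL C' = cntf fL C :=
          cntf_congr (fun w => by unfold fL; rw [hld_o w])
        rw [hL']; exact hnL
    · have hid : ciwPair n (C u) (C v) = (C u, C v) :=
        ciw_none n (C u) (C v) hnR1 hnR2 hnR3 hr4 hr5
      rw [hC', step_id hid]
      exact ⟨fun w => le_refl _, h34, ⟨y, hy⟩, hnL⟩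


/-! ### Master step lemma -/

lemma step_main {n : ℕ} {C : V → StW} {u v : V} (hn : 2 ≤ n) (hV : Fintype.card V = n)
    (huv : u ≠ v) (h : Inv n C) :
    Inv n (stepFn (ciwδ n) C (u, v)) ∧
    rk n C ≤ rk n (stepFn (ciwδ n) C (u, v)) ∧
    (∀ w, (C w).phase ≤ (stepFn (ciwδ n) C (u, v) w).phase) := by
  rcases h with h | ⟨ℓ, h⟩ | ⟨ℓ, h⟩ | h | h
  · obtain ⟨hm, hres⟩ := stepA hn hV huv h
    rcases hres with ⟨hA', -⟩ | ⟨ℓ, hB'⟩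
    · exact ⟨Or.inl hA', by rw [rk_A hn hV h, rk_A hn hV hA'], hm⟩
    · exact ⟨Or.inr (Or.inl ⟨ℓ, hB'⟩), by rw [rk_A hn hV h]; omega, hm⟩
  · obtain ⟨hm, hres⟩ := stepB hn hV huv h
    rcases hres with ⟨hB', he, -⟩ | ⟨⟨ℓ', hC'⟩, he⟩ | ⟨hD', he⟩
    · exact ⟨Or.inr (Or.inl ⟨ℓ, hB'⟩), by rw [rk_B h, rk_B hB', he], hm⟩
    · refine ⟨Or.inr (Or.inr (Or.inl ⟨ℓ', hC'⟩)), ?_, hm⟩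
      rw [rk_B h, rk_C hC', he]; omega
    · refine ⟨Or.inr (Or.inr (Or.inr (Or.inl hD'))), ?_, hm⟩
      have := cnt3_B_le hV h
      rw [rk_B h, rk_D hn hV hD']; omega
  · obtain ⟨hm, hres⟩ := stepC hn hV huv h
    rcases hres with ⟨hC', he, -⟩ | ⟨⟨ℓ', hB'⟩, he⟩
    · exact ⟨Or.inr (Or.inr (Or.inl ⟨ℓ, hC'⟩)), by rw [rk_C h, rk_C hC', he], hm⟩
    · refine ⟨Or.inr (Or.inl ⟨ℓ', hB'⟩), ?_, hm⟩
      rw [rk_C h, rk_B hB', he]; omega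
  · obtain ⟨hm, hres⟩ := stepD hn hV huv h
    rcases hres with ⟨hD', -⟩ | hE'
    · exact ⟨Or.inr (Or.inr (Or.inr (Or.inl hD'))),
        by rw [rk_D hn hV h, rk_D hn hV hD'], hm⟩
    · refine ⟨Or.inr (Or.inr (Or.inr (Or.inr hE'))), ?_, hm⟩
      rw [rk_D hn hV h]
      rcases rk_E hE' with h2 | h2 <;> omega
  · obtain ⟨hm, hE'⟩ := stepE hn hV huv h
    refine ⟨Or.inr (Or.inr (Or.inr (Or.inr hE'))), ?_, hm⟩
    by_cases h4 : ∀ w : V, (C w).phase = 4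
    · have h4' : ∀ w : V, (stepFn (ciwδ n) C (u, v) w).phase = 4 := by
        intro w
        have := hm w
        rcases hE'.1 w with h1 | h1
        · rw [h4 w] at this; omega
        · exact h1
      rw [rk_E4 h4, rk_E4 h4']
    · rw [rk_E3 h h4]
      rcases rk_E hE' with h2 | h2 <;> omega

lemma stA_init {n : ℕ} (hn : 2 ≤ n) (hV : Fintype.card V = n) :
    StA n (fun _ : V => initW) := by
  refine ⟨fun v => rfl, fun v => rfl, fun v h => by simp [initW] at h,
    fun v _ => Nat.one_pos, ?_, ?_⟩
  · have h1 : cntf fcnt (fun _ : V => initW) = ∑ _w : V, 1 := rfl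
    rw [h1]; simp [hV]
  · have h1 : cntf fL (fun _ : V => initW) = ∑ _w : V, 1 := by
      apply Finset.sum_congr rfl
      intro w _
      simp [fL, initW]
    rw [h1]; simp [hV]; omega

/-! ### The execution -/

/-- The configuration at time `t`. -/
def cf (n : ℕ) (γ : ℕ → V × V) (t : ℕ) : V → StW := conf (ciwδ n) initW γ t

lemma cf_succ (n : ℕ) (γ : ℕ → V × V) (t : ℕ) :
    cf n γ (t + 1) = stepFn (ciwδ n) (cf n γ t) ((γ t).1, (γ t).2) := rfl

section Run

variable {n : ℕ} {γ : ℕ → V × V}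

lemma cf_inv (hn : 2 ≤ n) (hV : Fintype.card V = n)
    (hs : ∀ t, (γ t).1 ≠ (γ t).2) : ∀ t, Inv n (cf n γ t) := by
  intro t
  induction t with
  | zero => exact Or.inl (stA_init hn hV)
  | succ t ih =>
    rw [cf_succ]
    exact (step_main hn hV (hs t) ih).1

lemma cf_rk_mono (hn : 2 ≤ n) (hV : Fintype.card V = n)
    (hs : ∀ t, (γ t).1 ≠ (γ t).2) {s t : ℕ} (hst : s ≤ t) :
    rk n (cf n γ s) ≤ rk n (cf n γ t) := by
  induction t, hst using Nat.le_induction with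
  | base => exact le_refl _
  | succ t hst ih =>
    refine le_trans ih ?_
    rw [cf_succ]
    exact (step_main hn hV (hs t) (cf_inv hn hV hs t)).2.1

lemma cf_phase_mono (hn : 2 ≤ n) (hV : Fintype.card V = n)
    (hs : ∀ t, (γ t).1 ≠ (γ t).2) {s t : ℕ} (hst : s ≤ t) (w : V) :
    (cf n γ s w).phase ≤ (cf n γ t w).phase := by
  induction t, hst using Nat.le_induction with
  | base => exact le_refl _
  | succ t hst ih =>
    refine le_trans ih ?_
    rw [cf_succ]
    exact (step_main hn hV (hs t) (cf_inv hn hV hs t)).2.2 w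

end Run

/-! ### Rounds -/

lemma round_cover {γ : ℕ → V × V}
    (hγ : WeaklyFair (fun e : V × V => e.1 ≠ e.2) γ) (i : ℕ) :
    ∀ e : V × V, e.1 ≠ e.2 →
      ∃ s, roundEnd (fun e : V × V => e.1 ≠ e.2) γ i ≤ s ∧
        s < roundEnd (fun e : V × V => e.1 ≠ e.2) γ (i + 1) ∧ γ s = e := by
  set E : V × V → Prop := fun e => e.1 ≠ e.2 with hE
  set t0 := roundEnd E γ i with ht0
  have hfair := hγ.2
  -- the set defining `firstLen` for the shifted schedule is nonempty
  have hex : ∀ e : V × V, E e → ∃ s, t0 ≤ s ∧ γ s = e := fun e he => hfair e he t0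
  classical
  set g : V × V → ℕ := fun e =>
    if h : E e then Classical.choose (hex e h) - t0 + 1 else 0 with hg
  set T := (univ : Finset (V × V)).sup g with hT
  have hTmem : T ∈ {t : ℕ | ∀ e, E e → ∃ s < t, (fun t => γ (t0 + t)) s = e} := by
    intro e he
    obtain ⟨h1, h2⟩ := Classical.choose_spec (hex e he)
    refine ⟨Classical.choose (hex e he) - t0, ?_, ?_⟩
    · have hle : g e ≤ T := Finset.le_sup (mem_univ e)
      rw [hg] at hle
      simp only [dif_pos he] at hle
      omega
    · show γ (t0 + (Classical.choose (hex e he) - t0)) = e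
      rw [show t0 + (Classical.choose (hex e he) - t0) = Classical.choose (hex e he) by omega]
      exact h2
  have hne : {t : ℕ | ∀ e, E e → ∃ s < t, (fun t => γ (t0 + t)) s = e}.Nonempty := ⟨T, hTmem⟩
  have hmem := Nat.sInf_mem hne
  intro e he
  obtain ⟨s, hs1, hs2⟩ := hmem e he
  refine ⟨t0 + s, by omega, ?_, hs2⟩
  have : roundEnd E γ (i + 1) = t0 + firstLen E (fun t => γ (t0 + t)) := rfl
  rw [this]
  have : firstLen E (fun t => γ (t0 + t))
      = sInf {t : ℕ | ∀ e, E e → ∃ s < t, (fun t => γ (t0 + t)) s = e} := rfl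
  omega


lemma fL_one {q : StW} (h : fL q = 1) : q.leader = true := by
  by_cases hl : q.leader = true
  · exact hl
  · unfold fL at h; rw [if_neg hl] at h; omega

/-! ### Round progress -/

lemma round_progress {n : ℕ} {γ : ℕ → V × V} (hn : 2 ≤ n) (hV : Fintype.card V = n)
    (hγ : WeaklyFair (fun e : V × V => e.1 ≠ e.2) γ) (i : ℕ) :
    min (2*n+2) (rk n (cf n γ (roundEnd (fun e : V × V => e.1 ≠ e.2) γ i)) + 1)
      ≤ rk n (cf n γ (roundEnd (fun e : V × V => e.1 ≠ e.2) γ (i+1))) := by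
  have hs : ∀ t, (γ t).1 ≠ (γ t).2 := hγ.1
  have hcov := round_cover hγ i
  set t0 := roundEnd (fun e : V × V => e.1 ≠ e.2) γ i with ht0
  set t1 := roundEnd (fun e : V × V => e.1 ≠ e.2) γ (i+1) with ht1
  have ht01 : t0 ≤ t1 := by rw [ht0, ht1]; exact Nat.le_add_right _ _
  set r := rk n (cf n γ t0) with hr
  rcases le_or_gt (2*n+2) r with hbig | hsmall
  · have := cf_rk_mono hn hV hs ht01
    omega
  rcases le_or_gt (r+1) (rk n (cf n γ t1)) with hstep | hstuck
  · omega
  exfalso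
  have hconst : ∀ s, t0 ≤ s → s ≤ t1 → rk n (cf n γ s) = r := by
    intro s h1 h2
    have e1 := cf_rk_mono hn hV hs h1
    have e2 := cf_rk_mono hn hV hs h2
    omega
  rcases cf_inv hn hV hs t1 with hA | ⟨ℓ1, hB⟩ | ⟨ℓ1, hC⟩ | hD | hE
  · -- stuck in stage A: impossible after a full round
    have hr0 : r = 0 := by rw [← hconst t1 ht01 (le_refl _), rk_A hn hV hA]
    have hAll : ∀ s, t0 ≤ s → s ≤ t1 → StA n (cf n γ s) := fun s h1 h2 =>
      stA_det hn hV (cf_inv hn hV hs s) (by rw [hconst s h1 h2, hr0])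
    have hLstep : ∀ t, t0 ≤ t → t + 1 ≤ t1 → ∀ w,
        (cf n γ (t+1) w).leader = true → (cf n γ t w).leader = true := by
      intro t h1 h2 w hw
      have hA_t := hAll t h1 (by omega)
      have hA_t1 := hAll (t+1) (by omega) h2
      obtain ⟨-, hres⟩ := stepA hn hV (hs t) hA_t
      rcases hres with ⟨-, hshr⟩ | ⟨ℓ, hB'⟩
      · exact hshr w (by rw [← cf_succ]; exact hw)
      · exfalso
        rw [← cf_succ] at hB'
        have h3 := hB'.2.1
        rw [hA_t1.1 ℓ] at h3
        omega
    have hLmono : ∀ s t, t0 ≤ s → s ≤ t → t ≤ t1 →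
        ∀ w, (cf n γ t w).leader = true → (cf n γ s w).leader = true := by
      intro s t hs0 hst
      induction t, hst using Nat.le_induction with
      | base => exact fun _ w h => h
      | succ t hst ih =>
        intro ht1' w hw
        exact ih (by omega) w (hLstep t (by omega) ht1' w hw)
    obtain ⟨p, q, hpq, hp1, hq1⟩ := exists_two_of_cntf fL_le hA.2.2.2.2.2
    have hp := fL_one hp1
    have hq := fL_one hq1
    obtain ⟨s, hs1, hs2, hs3⟩ := hcov (p, q) hpq
    have hps : (cf n γ s p).leader = true := hLmono s t1 hs1 (by omega) (le_refl _) p hp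
    have hqs : (cf n γ s q).leader = true := hLmono s t1 hs1 (by omega) (le_refl _) q hq
    have hqs1 : (cf n γ (s+1) q).leader = true :=
      hLmono (s+1) t1 (by omega) (by omega) (le_refl _) q hq
    have hstep_eq : cf n γ (s+1) q = (ciwPair n (cf n γ s p) (cf n γ s q)).2 := by
      rw [cf_succ, hs3]; exact step_v n _ hpq
    rw [ciw_R1 n _ _ hps hqs] at hstep_eq
    split_ifs at hstep_eq <;> rw [hstep_eq] at hqs1 <;> simp at hqs1
  · -- stuck in stage B: impossible after a full round
    have hd1 : cntf f3 (cf n γ t1) ≤ n - 1 := cnt3_B_le hV hB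
    set d := cntf f3 (cf n γ t1) with hd
    have hr1 : r = 2*d+1 := by rw [← hconst t1 ht01 (le_refl _), rk_B hB]
    have hdet : ∀ s, t0 ≤ s → s ≤ t1 →
        ∃ ℓ, StB n ℓ (cf n γ s) ∧ cntf f3 (cf n γ s) = d := fun s h1 h2 =>
      stB_det hn hV (cf_inv hn hV hs s) (by rw [hconst s h1 h2, hr1]) (by omega)
    obtain ⟨ℓ0, hB0, -⟩ := hdet t0 (le_refl _) ht01
    set m0 := (cf n γ t0 ℓ0).mode with hm0
    have hkey : ∀ t, t0 ≤ t → t ≤ t1 →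
        StB n ℓ0 (cf n γ t) ∧ (cf n γ t ℓ0).mode = m0 := by
      intro t h1
      induction t, h1 using Nat.le_induction with
      | base => exact fun _ => ⟨hB0, rfl⟩
      | succ t h1 ih =>
        intro h2
        obtain ⟨hBt, hmt⟩ := ih (by omega)
        obtain ⟨-, hres⟩ := stepB hn hV (hs t) hBt
        rw [← cf_succ] at hres
        obtain ⟨ℓx, -, hx2⟩ := hdet t (by omega) (by omega)
        rcases hres with ⟨hB', he, -, hml, -⟩ | ⟨⟨ℓ', hC'⟩, he⟩ | ⟨hD', he⟩
        · exact ⟨hB', by rw [hml, hmt]⟩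
        · exfalso
          have h3 := hconst (t+1) (by omega) h2
          rw [rk_C hC', he, hx2] at h3
          omega
        · exfalso
          have h3 := hconst (t+1) (by omega) h2
          rw [rk_D hn hV hD'] at h3
          omega
    have hstepm : ∀ t w, t0 ≤ t → t + 1 ≤ t1 →
        (cf n γ t w).mode ≠ m0 → (cf n γ (t+1) w).mode ≠ m0 := by
      intro t w h1 h2 hw
      obtain ⟨hBt, hmt⟩ := hkey t h1 (by omega)
      obtain ⟨hBt1, -⟩ := hkey (t+1) (by omega) h2
      obtain ⟨-, hres⟩ := stepB hn hV (hs t) hBt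
      rw [← cf_succ] at hres
      obtain ⟨ℓx, -, hx2⟩ := hdet t (by omega) (by omega)
      rcases hres with ⟨-, -, -, -, hmm⟩ | ⟨⟨ℓ', hC'⟩, he⟩ | ⟨hD', he⟩
      · rw [← hmt]
        exact hmm w (by rw [hmt]; exact hw)
      · exfalso
        have h3 := hconst (t+1) (by omega) h2
        rw [rk_C hC', he, hx2] at h3
        omega
      · exfalso
        have h3 := hconst (t+1) (by omega) h2
        rw [rk_D hn hV hD'] at h3
        omega
    have hmodemono : ∀ s t w, t0 ≤ s → s ≤ t → t ≤ t1 →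
        (cf n γ s w).mode ≠ m0 → (cf n γ t w).mode ≠ m0 := by
      intro s t w h1 h2
      induction t, h2 using Nat.le_induction with
      | base => exact fun _ h => h
      | succ t h2 ih =>
        intro h3 hw
        exact hstepm t w (by omega) h3 (ih (by omega) hw)
    obtain ⟨hBt1, hmt1⟩ := hkey t1 ht01 (le_refl _)
    obtain ⟨x, hxl, hxm⟩ := hBt1.2.2.2.2.2.2.2
    have hxm0 : (cf n γ t1 x).mode = m0 := by rw [hxm, hmt1]
    have hlx : ℓ0 ≠ x := fun h => hxl h.symm
    obtain ⟨s, hs1, hs2, hs3⟩ := hcov (ℓ0, x) hlx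
    obtain ⟨hBs, hms⟩ := hkey s hs1 (by omega)
    have hxs : (cf n γ s x).mode = m0 := by
      by_contra h
      exact (hmodemono s t1 x hs1 (by omega) (le_refl _) h) hxm0
    have hbl : (cf n γ s x).leader = false := hBs.2.2.1 x hxl
    have hstep_eq : cf n γ (s+1) x = (ciwPair n (cf n γ s ℓ0) (cf n γ s x)).2 := by
      rw [cf_succ, hs3]; exact step_v n _ hlx
    rw [ciw_R2 n _ _ (by rintro ⟨-, h⟩; rw [hbl] at h; simp at h)
      ⟨hBs.1, hBs.2.1, by rw [hms, hxs]⟩] at hstep_eq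
    have hx1 : (cf n γ (s+1) x).mode = !m0 := by
      split_ifs at hstep_eq <;> rw [hstep_eq] <;> simp [hxs]
    have hfin : (cf n γ t1 x).mode ≠ m0 := by
      apply hmodemono (s+1) t1 x (by omega) (by omega) (le_refl _)
      rw [hx1]
      cases m0 <;> simp
    exact hfin hxm0
  · -- stuck in stage C: impossible after a full round
    have hd1 : cntf f3 (cf n γ t1) ≤ n - 1 := cnt3_C_le hV hC
    have hd2 : 1 ≤ cntf f3 (cf n γ t1) := cnt3_C_ge hC
    set d := cntf f3 (cf n γ t1) with hd
    have hr1 : r = 2*d := by rw [← hconst t1 ht01 (le_refl _), rk_C hC]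
    have hdet : ∀ s, t0 ≤ s → s ≤ t1 →
        ∃ ℓ, StC n ℓ (cf n γ s) ∧ cntf f3 (cf n γ s) = d := fun s h1 h2 =>
      stC_det hn hV (cf_inv hn hV hs s) (by rw [hconst s h1 h2, hr1]) (by omega) (by omega)
    obtain ⟨ℓ0, hC0, -⟩ := hdet t0 (le_refl _) ht01
    have hkey : ∀ t, t0 ≤ t → t ≤ t1 → StC n ℓ0 (cf n γ t) := by
      intro t h1
      induction t, h1 using Nat.le_induction with
      | base => exact fun _ => hC0
      | succ t h1 ih =>
        intro h2
        have hCt := ih (by omega)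
        obtain ⟨-, hres⟩ := stepC hn hV (hs t) hCt
        rw [← cf_succ] at hres
        obtain ⟨ℓx, -, hx2⟩ := hdet t (by omega) (by omega)
        rcases hres with ⟨hC', -, -⟩ | ⟨⟨ℓ', hB'⟩, he⟩
        · exact hC'
        · exfalso
          have h3 := hconst (t+1) (by omega) h2
          rw [rk_B hB', he, hx2] at h3
          omega
    have hCt1 := hkey t1 ht01 (le_refl _)
    obtain ⟨x, hx⟩ := hCt1.2.2.2.2.2.2.2
    have hxl : x ≠ ℓ0 := by
      intro h; rw [h, hCt1.2.1] at hx; omega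
    have hlx : ℓ0 ≠ x := fun h => hxl h.symm
    obtain ⟨s, hs1, hs2, hs3⟩ := hcov (ℓ0, x) hlx
    have hCs := hkey s hs1 (by omega)
    have hphx : (cf n γ s x).phase = 1 := by
      rcases hCs.2.2.2.1 x hxl with h | h
      · exact h
      · exfalso
        have := cf_phase_mono hn hV hs (show s ≤ t1 by omega) x
        rw [h, hx] at this
        omega
    have hbl : (cf n γ s x).leader = false := hCs.2.2.1 x hxl
    have hstep_eq : cf n γ (s+1) x = (ciwPair n (cf n γ s ℓ0) (cf n γ s x)).2 := by
      rw [cf_succ, hs3]; exact step_v n _ hlx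
    rw [ciw_R3 n _ _ (by rintro ⟨-, h⟩; rw [hbl] at h; simp at h)
      (by rintro ⟨-, h, -⟩; rw [hCs.2.1] at h; omega)
      ⟨hCs.1, hCs.2.1, hphx⟩] at hstep_eq
    have hx2 : (cf n γ (s+1) x).phase = 2 := by rw [hstep_eq]
    have := cf_phase_mono hn hV hs (show s + 1 ≤ t1 by omega) x
    rw [hx2, hx] at this
    omega
  · -- stuck in stage D: impossible after a full round
    have hr1 : r = 2*n := by rw [← hconst t1 ht01 (le_refl _), rk_D hn hV hD]
    have hdet : ∀ s, t0 ≤ s → s ≤ t1 → StD n (cf n γ s) := fun s h1 h2 =>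
      stD_det hn hV (cf_inv hn hV hs s) (by rw [hconst s h1 h2, hr1])
    have hshr : ∀ t w, t0 ≤ t → t + 1 ≤ t1 →
        0 < (cf n γ (t+1) w).cnt → 0 < (cf n γ t w).cnt := by
      intro t w h1 h2 hw
      have hDt := hdet t h1 (by omega)
      obtain ⟨-, hres⟩ := stepD hn hV (hs t) hDt
      rw [← cf_succ] at hres
      rcases hres with ⟨-, hsh⟩ | hE'
      · exact hsh w hw
      · exfalso
        have h3 := hconst (t+1) (by omega) h2
        rcases rk_E hE' with h4 | h4 <;> omega
    have hposmono : ∀ s t w, t0 ≤ s → s ≤ t → t ≤ t1 →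
        0 < (cf n γ t w).cnt → 0 < (cf n γ s w).cnt := by
      intro s t w h1 h2
      induction t, h2 using Nat.le_induction with
      | base => exact fun _ h => h
      | succ t h2 ih =>
        intro h3 hw
        exact ih (by omega) (hshr t w (by omega) h3 hw)
    obtain ⟨p, q, hpq, hp, hq⟩ := (hdet t1 ht01 (le_refl _)).2.2.2
    obtain ⟨s, hs1, hs2, hs3⟩ := hcov (p, q) hpq
    have hDs := hdet s hs1 (by omega)
    have hps : 0 < (cf n γ s p).cnt := hposmono s t1 p hs1 (by omega) (le_refl _) hp
    have hqs : 0 < (cf n γ s q).cnt := hposmono s t1 q hs1 (by omega) (le_refl _) hq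
    have hnR1 : ¬ ((cf n γ s p).leader = true ∧ (cf n γ s q).leader = true) := by
      rintro ⟨h1, h2⟩
      have := pair_le_cntf hpq fL (cf n γ s)
      have e1 : fL (cf n γ s p) = 1 := by simp [fL, h1]
      have e2 : fL (cf n γ s q) = 1 := by simp [fL, h2]
      have := hDs.2.1
      omega
    have hstep_eq : cf n γ (s+1) q = (ciwPair n (cf n γ s p) (cf n γ s q)).2 := by
      rw [cf_succ, hs3]; exact step_v n _ hpq
    rw [ciw_R4 n _ _ hnR1
      (by rintro ⟨-, h, -⟩; rw [hDs.1 p] at h; omega)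
      (by rintro ⟨-, -, h⟩; rw [hDs.1 q] at h; omega)
      ⟨hDs.1 p, hDs.1 q, hps, hqs⟩] at hstep_eq
    have hq0 : (cf n γ (s+1) q).cnt = 0 := by
      split_ifs at hstep_eq <;> rw [hstep_eq]
    have := hposmono (s+1) t1 q (by omega) (by omega) (le_refl _) hq
    omega
  · -- stuck in stage E: impossible after a full round
    have hrt1 := hconst t1 ht01 (le_refl _)
    have hr1 : r = 2*n+1 := by
      rcases rk_E hE with h2 | h2 <;> omega
    have hdet : ∀ s, t0 ≤ s → s ≤ t1 → StE n (cf n γ s) := fun s h1 h2 =>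
      stE_det hn hV (cf_inv hn hV hs s) (by rw [hconst s h1 h2, hr1])
    have hnall : ¬ ∀ w, (cf n γ t1 w).phase = 4 := by
      intro h
      rw [rk_E4 h] at hrt1
      omega
    push_neg at hnall
    obtain ⟨x, hx4⟩ := hnall
    have hx3 : (cf n γ t1 x).phase = 3 := by
      rcases hE.1 x with h | h
      · exact h
      · exact absurd h hx4
    obtain ⟨a0, ha0⟩ := (hdet t0 (le_refl _) ht01).2.1
    have ha0t1 : 4 ≤ (cf n γ t1 a0).phase := by
      have := cf_phase_mono hn hV hs ht01 a0
      omega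
    have ha0x : a0 ≠ x := by
      intro h
      rw [h, hx3] at ha0t1
      omega
    obtain ⟨s, hs1, hs2, hs3⟩ := hcov (a0, x) ha0x
    have hEs := hdet s hs1 (by omega)
    have ha0s : (cf n γ s a0).phase = 4 := by
      have h1 := cf_phase_mono hn hV hs hs1 a0
      rcases hEs.1 a0 with h | h <;> omega
    have hnR1 : ¬ ((cf n γ s a0).leader = true ∧ (cf n γ s x).leader = true) := by
      rintro ⟨h1, h2⟩
      have := pair_le_cntf ha0x fL (cf n γ s)
      have e1 : fL (cf n γ s a0) = 1 := by simp [fL, h1]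
      have e2 : fL (cf n γ s x) = 1 := by simp [fL, h2]
      have := hEs.2.2
      omega
    have hstep_eq : cf n γ (s+1) x = (ciwPair n (cf n γ s a0) (cf n γ s x)).2 := by
      rw [cf_succ, hs3]; exact step_v n _ ha0x
    rw [ciw_R5 n _ _ hnR1
      (by rintro ⟨-, h, -⟩; omega)
      (by rintro ⟨-, h, -⟩; omega)
      (by rintro ⟨h, -⟩; omega)
      ha0s] at hstep_eq
    have hx2 : (cf n γ (s+1) x).phase = 4 := by rw [hstep_eq]
    have := cf_phase_mono hn hV hs (show s + 1 ≤ t1 by omega) x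
    rw [hx2, hx3] at this
    omega


/-! ### Final assembly -/

lemma rk_rounds {n : ℕ} {γ : ℕ → V × V} (hn : 2 ≤ n) (hV : Fintype.card V = n)
    (hγ : WeaklyFair (fun e : V × V => e.1 ≠ e.2) γ) :
    ∀ i, min (2*n+2) i ≤ rk n (cf n γ (roundEnd (fun e : V × V => e.1 ≠ e.2) γ i)) := by
  intro i
  induction i with
  | zero => simp
  | succ i ih =>
    have := round_progress hn hV hγ i
    omega

lemma all4_of_rk {n : ℕ} {C : V → StW} (hV : Fintype.card V = n)
    (h : rk n C = 2*n+2) : ∀ w : V, (C w).phase = 4 := by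
  by_cases h1 : ∀ w : V, (C w).phase = 4
  · exact h1
  · exfalso
    have hc : cntf f3 C ≤ n := hV ▸ cntf_le_card f3_le C
    rw [rk, if_neg h1] at h
    split_ifs at h <;> omega

lemma nL_final {n : ℕ} {C : V → StW} (hn : 2 ≤ n) (hV : Fintype.card V = n)
    (hI : Inv n C) (h4 : ∀ w : V, (C w).phase = 4) : cntf fL C ≤ 1 := by
  obtain ⟨v0⟩ := nonempty_of_card hn hV
  rcases hI with h | ⟨ℓ, h⟩ | ⟨ℓ, h⟩ | h | h
  · have := h.1 v0; rw [h4 v0] at this; omega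
  · have := h.2.1; rw [h4 ℓ] at this; omega
  · obtain ⟨x, hx⟩ := h.2.2.2.2.2.2.2; rw [h4 x] at hx; omega
  · have := h.1 v0; rw [h4 v0] at this; omega
  · exact h.2.2

lemma stepF {n : ℕ} {C : V → StW} {u v : V} (huv : u ≠ v)
    (h4 : ∀ w : V, (C w).phase = 4) (hnL : cntf fL C ≤ 1) :
    (∀ w, (stepFn (ciwδ n) C (u, v) w).phase = 4) ∧
    cntf fL (stepFn (ciwδ n) C (u, v)) ≤ 1 := by
  set C' := stepFn (ciwδ n) C (u, v) with hC'
  have ho : ∀ w, w ≠ u → w ≠ v → C' w = C w := fun w h1 h2 => step_o n C w h1 h2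
  have hnR1 : ¬ ((C u).leader = true ∧ (C v).leader = true) := by
    rintro ⟨h1, h2⟩
    have := pair_le_cntf huv fL C
    have e1 : fL (C u) = 1 := by simp [fL, h1]
    have e2 : fL (C v) = 1 := by simp [fL, h2]
    omega
  have hr5' := ciw_R5 n (C u) (C v) hnR1
    (by rintro ⟨-, h, -⟩; rw [h4 u] at h; omega)
    (by rintro ⟨-, h, -⟩; rw [h4 u] at h; omega)
    (by rintro ⟨h, -⟩; rw [h4 u] at h; omega)
    (h4 u)
  have hu' : C' u = C u := by rw [hC', step_u, hr5']
  have hv' : C' v = ⟨(C v).leader, 4, (C v).mode, (C v).cnt⟩ := by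
    rw [hC', step_v n C huv, hr5']
  have hld_o : ∀ w, (C' w).leader = (C w).leader := by
    intro w
    by_cases h1 : w = u
    · rw [h1, hu']
    · by_cases h2 : w = v
      · rw [h2, hv']
      · rw [ho w h1 h2]
  refine ⟨?_, ?_⟩
  · intro w
    by_cases h1 : w = u
    · rw [h1, hu']; exact h4 u
    · by_cases h2 : w = v
      · rw [h2, hv']
      · rw [ho w h1 h2]; exact h4 w
  · have hL' : cntf fL C' = cntf fL C :=
      cntf_congr (fun w => by unfold fL; rw [hld_o w])
    rw [hL']; exact hnL

lemma stable_final {n : ℕ} {C : V → StW}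
    (h4 : ∀ w : V, (C w).phase = 4) (hnL : cntf fL C ≤ 1) :
    IsStable outW (ciwδ n) (fun e : V × V => e.1 ≠ e.2) C := by
  have key : ∀ D, Reach (ciwδ n) (fun e : V × V => e.1 ≠ e.2) C D →
      (∀ w, (D w).phase = 4) ∧ cntf fL D ≤ 1 := by
    intro D h
    induction h with
    | refl => exact ⟨h4, hnL⟩
    | tail h1 h2 ih =>
      rename_i Dmid _
      obtain ⟨e, he, rfl⟩ := h2
      have hpair : stepFn (ciwδ n) Dmid e = stepFn (ciwδ n) Dmid (e.1, e.2) := rfl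
      rw [hpair]
      exact stepF he ih.1 ih.2
  intro D hreach a
  rw [outW, outW, (key D hreach).1 a, h4 a]

end Aux

theorem statement10 (n : ℕ) (hn : 2 ≤ n) (V : Type) [Fintype V]
    (hV : Fintype.card V = n) :
    ∀ γ : ℕ → V × V, WeaklyFair (fun e : V × V => e.1 ≠ e.2) γ →
      IsStable outW (ciwδ n) (fun e : V × V => e.1 ≠ e.2)
        (conf (ciwδ n) initW γ (roundEnd (fun e : V × V => e.1 ≠ e.2) γ (2 * n + 4))) ∧
      ∀ a : V,
        (conf (ciwδ n) initW γ (roundEnd (fun e : V × V => e.1 ≠ e.2) γ (2 * n + 4)) a).phase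
          = 4 := by
  intro γ hγ
  have hs : ∀ t, (γ t).1 ≠ (γ t).2 := hγ.1
  set S := roundEnd (fun e : V × V => e.1 ≠ e.2) γ (2*n+4) with hS
  have h1 : min (2*n+2) (2*n+4) ≤ rk n (cf n γ S) := by
    rw [hS]; exact rk_rounds hn hV hγ (2*n+4)
  have h2 : rk n (cf n γ S) ≤ 2*n+2 := rk_le hV
  have h3 : rk n (cf n γ S) = 2*n+2 := by omega
  have h4 := all4_of_rk hV h3
  have h5 := nL_final hn hV (cf_inv hn hV hs S) h4
  exact ⟨stable_final h4 h5, h4⟩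

end

end CGI
end

section
/- Fix n ≥ 2 and let G=(V,E) be any communication graph with n vertices. In every configuration C reachable from the initial configuration under the protocol CIG, the sum of size(C(a)) over all agents a with token(C(a)) = ⊤ equals n. -/
/-! Population protocols on communication graphs: general framework. -/

namespace CGI

attribute [local instance] Classical.propDecidable

noncomputable section

variable {V Q : Type*}

/-- A protocol (initial state `ρ`, output map `out` with `true` = yes and `false` = no,
transition function `δ`) solves complete graph identification under weak fairness on the
communication graph `E`: every weakly fair execution contains a stable configuration in
which every agent outputs yes if the graph is complete, and no otherwise. -/
def SolvesWF (ρ : Q) (out : Q → Bool) (δ : Q × Q → Q × Q) (E : V × V → Prop) : Prop :=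
  ∀ γ : ℕ → V × V, WeaklyFair E γ →
    ∃ t : ℕ, IsStable out δ E (conf δ ρ γ t) ∧
      (IsComplete E → ∀ a, out (conf δ ρ γ t a) = true) ∧
      (¬ IsComplete E → ∀ a, out (conf δ ρ γ t a) = false)

/-- States of the protocol `CIG`. -/
structure StG where
  leader : Bool  -- `true` = L, `false` = F
  phase : ℕ
  mode : Bool    -- `false` = 0, `true` = 1
  cnt : ℕ
  token : Bool   -- `true` = ⊤, `false` = ⊥
  size : ℕ
  deriving DecidableEq

/-- The initial state `(L,1,0,1,⊤,1)` of `CIG`. -/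
def initG : StG := ⟨true, 1, false, 1, true, 1⟩

/-- `Reset`: set the components `(leader, phase, mode, cnt)` to `(L,1,0,1)`. -/
def resetG (x : StG) : StG := { x with leader := true, phase := 1, mode := false, cnt := 1 }

/-- The rules (G1)–(G3) of `CIG` for initiator `a` and responder `b`. -/
def gRule (a b : StG) : StG × StG :=
  if a.token = true ∧ b.token = true then
    -- (G1)
    (resetG { a with size := a.size + b.size },
     resetG { b with token := false, size := a.size + b.size })
  else if a.token = true ∧ a.size ≤ b.size then
    -- (G2) with (x,y) = (a,b): swap tokens and sizes
    ({ a with token := b.token, size := b.size }, { b with token := a.token, size := a.size })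
  else if b.token = true ∧ b.size ≤ a.size then
    -- (G2) with (x,y) = (b,a): swap tokens and sizes
    ({ a with token := b.token, size := b.size }, { b with token := a.token, size := a.size })
  else if b.size < a.size then
    -- (G3) with (x,y) = (a,b): swap tokens, b.size := a.size, Reset(b)
    ({ a with token := b.token }, resetG { b with token := a.token, size := a.size })
  else if a.size < b.size then
    -- (G3) with (x,y) = (b,a): swap tokens, a.size := b.size, Reset(a)
    (resetG { a with token := b.token, size := b.size }, { b with token := a.token })
  else (a, b)

/-- A full `CIG` interaction: first (G1)–(G3), then, if the resulting sizes agree and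
equal `s`, the rules of `CIW_s` on the `(leader, phase, mode, cnt)` components
(with `cnt` values truncated at `s`). -/
def cigPair (a b : StG) : StG × StG :=
  let a' := (gRule a b).1
  let b' := (gRule a b).2
  if a'.size = b'.size then
    let w := ciwPair a'.size ⟨a'.leader, a'.phase, a'.mode, a'.cnt⟩
      ⟨b'.leader, b'.phase, b'.mode, b'.cnt⟩
    ({ a' with leader := w.1.leader, phase := w.1.phase, mode := w.1.mode, cnt := w.1.cnt },
     { b' with leader := w.2.leader, phase := w.2.phase, mode := w.2.mode, cnt := w.2.cnt })
  else (a', b')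

/-- The transition function of `CIG`. -/
def cigδ : StG × StG → StG × StG := fun p => cigPair p.1 p.2

/-- Output of `CIG`: an agent outputs `yes` (`true`) iff its phase is 4. -/
def outG (q : StG) : Bool := q.phase == 4

/-- Token-weighted size. -/
def tw (q : StG) : ℕ := if q.token = true then q.size else 0

lemma cig_tw_eq_gRule (a b : StG) :
    tw (cigPair a b).1 + tw (cigPair a b).2
      = tw (gRule a b).1 + tw (gRule a b).2 := by
  unfold cigPair
  dsimp only
  split <;> rfl

set_option maxHeartbeats 1600000 in
lemma gRule_tw (a b : StG) :
    tw (gRule a b).1 + tw (gRule a b).2 = tw a + tw b := by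
  obtain ⟨al, ap, am, ac, at', as⟩ := a
  obtain ⟨bl, bp, bm, bc, bt, bs⟩ := b
  unfold gRule resetG tw
  cases at' <;> cases bt <;> split_ifs <;> simp_all <;> omega

lemma cig_tw (a b : StG) :
    tw (cigδ (a, b)).1 + tw (cigδ (a, b)).2 = tw a + tw b := by
  show tw (cigPair a b).1 + tw (cigPair a b).2 = _
  rw [cig_tw_eq_gRule, gRule_tw]

lemma sum_decomp {V : Type} [Fintype V] (h : V → ℕ) (u v : V) (huv : u ≠ v) :
    ∑ a : V, h a = h u + h v + ∑ a ∈ (Finset.univ.erase u).erase v, h a := by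
  rw [← Finset.add_sum_erase _ h (Finset.mem_univ u)]
  rw [← Finset.add_sum_erase _ h (Finset.mem_erase.mpr ⟨Ne.symm huv, Finset.mem_univ v⟩)]
  ring

lemma step_tw {V : Type} [Fintype V] (C : V → StG) (e : V × V) (hne : e.1 ≠ e.2) :
    ∑ a : V, tw (stepFn cigδ C e a) = ∑ a : V, tw (C a) := by
  rw [sum_decomp (fun a => tw (stepFn cigδ C e a)) e.1 e.2 hne,
      sum_decomp (fun a => tw (C a)) e.1 e.2 hne]
  have h1 : stepFn cigδ C e e.1 = (cigδ (C e.1, C e.2)).1 := by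
    simp [stepFn]
  have h2 : stepFn cigδ C e e.2 = (cigδ (C e.1, C e.2)).2 := by
    simp [stepFn, hne.symm]
  have h3 : ∀ a ∈ (Finset.univ.erase e.1).erase e.2,
      tw (stepFn cigδ C e a) = tw (C a) := by
    intro a ha
    simp only [Finset.mem_erase] at ha
    simp [stepFn, ha.1, ha.2.1]
  rw [Finset.sum_congr rfl h3, h1, h2, cig_tw]

theorem statement11 (n : ℕ) (hn : 2 ≤ n) (V : Type) [Fintype V]
    (hV : Fintype.card V = n) (E : V × V → Prop) (hG : IsCommGraph E) :
    ∀ C : V → StG, Reach cigδ E (fun _ => initG) C →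
      (∑ a ∈ Finset.univ.filter (fun a : V => (C a).token = true), (C a).size) = n := by
  have key : ∀ C : V → StG, Reach cigδ E (fun _ => initG) C →
      ∑ a : V, tw (C a) = n := by
    intro C hC
    induction hC with
    | refl => simp [tw, initG, hV]
    | tail _ hstep ih =>
      obtain ⟨e, hE, rfl⟩ := hstep
      obtain ⟨u, v⟩ := e
      have hne : (u, v).1 ≠ (u, v).2 := by
        intro h
        simp only at h
        subst h
        exact hG.1 u hE
      rw [step_tw _ _ hne, ih]
  intro C hC
  rw [Finset.sum_filter]
  simpa [tw] using key C hC

end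

end CGI
end

section
/- Let k ≥ 2 and let (X_t)_{t≥1} be an i.i.d. sequence of random variables each uniformly distributed on a k-element set. Let T be the least t ≥ k such that the values X_{t−k+1}, X_{t−k+2}, …, X_t are pairwise distinct (T = ∞ if no such t exists). Then E[T] ≥ k^k/(2·k!) − 1. -/
/-!
STATEMENT 14: Let `k ≥ 2` and let `(X_t)` be i.i.d. uniform on a `k`-element set.
Let `T` be the least `t ≥ k` such that the `k` most recent values
`X_{t-k+1}, …, X_t` are pairwise distinct (`T = ∞` if no such `t` exists).
Then `E[T] ≥ k^k/(2·k!) − 1`.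
-/

namespace CGI

open MeasureTheory

noncomputable section

/-- The stopping time: the least `t ≥ k` such that the window
`ω (t-k+1), …, ω t` consists of pairwise distinct values, as a value in `ℝ≥0∞`
(`∞` when no such `t` exists). -/
def winTime {α : Type*} (k : ℕ) (ω : ℕ → α) : ENNReal :=
  sInf {r : ENNReal | ∃ t : ℕ, r = t ∧ k ≤ t ∧
    ∀ i j : ℕ, i < k → j < k → ω (t - i) = ω (t - j) → i = j}

/-- The "success at time s" event. -/
def winEv {α : Type*} (k s : ℕ) : Set (ℕ → α) :=
  {ω | k ≤ s ∧ ∀ i j : ℕ, i < k → j < k → ω (s - i) = ω (s - j) → i = j}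

lemma winTime_gt {α : Type*} (k : ℕ) (ω : ℕ → α) (t : ℕ)
    (h : ∀ s ≤ t, ω ∉ winEv k s) : (t : ENNReal) < winTime k ω := by
  have : (t : ENNReal) + 1 ≤ winTime k ω := by
    apply le_sInf
    rintro r ⟨s, rfl, hks, hdist⟩
    have hst : ¬ s ≤ t := fun hs => h s hs ⟨hks, hdist⟩
    have : t + 1 ≤ s := by omega
    exact_mod_cast this
  calc (t : ENNReal) < (t : ENNReal) + 1 := by
        exact ENNReal.lt_add_right (by simp) one_ne_zero
    _ ≤ _ := this

lemma winTime_nat_or_top {α : Type*} (k : ℕ) (ω : ℕ → α) :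
    winTime k ω = ⊤ ∨ ∃ m : ℕ, winTime k ω = m := by
  set S := {r : ENNReal | ∃ t : ℕ, r = t ∧ k ≤ t ∧
    ∀ i j : ℕ, i < k → j < k → ω (t - i) = ω (t - j) → i = j} with hS
  by_cases hne : S.Nonempty
  · right
    set M := {t : ℕ | (t : ENNReal) ∈ S} with hM
    have hMne : M.Nonempty := by
      obtain ⟨r, t, rfl, h⟩ := hne
      exact ⟨t, t, rfl, h⟩
    refine ⟨sInf M, le_antisymm (sInf_le (Nat.sInf_mem hMne)) ?_⟩
    apply le_sInf
    rintro r ⟨t, rfl, h⟩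
    have : sInf M ≤ t := Nat.sInf_le ⟨t, rfl, h⟩
    exact_mod_cast this
  · left
    rw [winTime, ← hS, Set.not_nonempty_iff_eq_empty.mp hne, sInf_empty]

lemma sum_indicator_le_winTime {α : Type*} (k N : ℕ) (ω : ℕ → α)
    (V : ℕ → Set (ℕ → α)) (hV : ∀ t, ω ∈ (V t)ᶜ → (t : ENNReal) < winTime k ω) :
    ∑ t ∈ Finset.range N, ((V t)ᶜ).indicator (1 : (ℕ → α) → ENNReal) ω
      ≤ winTime k ω := by
  rcases winTime_nat_or_top k ω with htop | ⟨m, hm⟩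
  · simp [htop]
  calc ∑ t ∈ Finset.range N, ((V t)ᶜ).indicator (1 : (ℕ → α) → ENNReal) ω
      ≤ ∑ t ∈ Finset.range N, (if t < m then (1 : ENNReal) else 0) := by
        apply Finset.sum_le_sum
        intro t _
        by_cases h : ω ∈ (V t)ᶜ
        · have := hV t h
          rw [hm] at this
          have htm : t < m := by exact_mod_cast this
          simp [htm, Set.indicator_of_mem h]
        · simp [Set.indicator_of_notMem h]
    _ = (((Finset.range N).filter (fun t => t < m)).card : ENNReal) :=
        by rw [Finset.sum_boole]
    _ ≤ (m : ENNReal) := by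
        have : (Finset.range N).filter (fun t => t < m) ⊆ Finset.range m := by
          intro x hx
          simp only [Finset.mem_filter, Finset.mem_range] at hx ⊢
          exact hx.2
        have := Finset.card_le_card this
        rw [Finset.card_range] at this
        exact_mod_cast this
    _ = winTime k ω := hm.symm

lemma measure_winEv_le (k : ℕ) (hk : 2 ≤ k) (α : Type) [Fintype α] [MeasurableSpace α]
    (hcard : Fintype.card α = k)
    (μ : Measure (ℕ → α))
    (hiid : ∀ (s : Finset ℕ) (f : ℕ → α),
      μ {ω : ℕ → α | ∀ t ∈ s, ω t = f t} = (1 / (k : ENNReal)) ^ s.card) (s : ℕ) :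
    μ (winEv k s) ≤ (Nat.factorial k : ENNReal) * (1 / (k : ENNReal)) ^ k := by
  by_cases hks : k ≤ s
  swap
  · have : winEv (α := α) k s = ∅ := by
      ext ω; simp [winEv]; intro h; exact absurd h hks
    simp [this]
  -- cylinder sets
  set F : Finset ℕ := (Finset.range k).image (fun i => s - i) with hF
  have hFcard : F.card = k := by
    rw [hF, Finset.card_image_of_injOn, Finset.card_range]
    intro i hi j hj hij
    simp only [Finset.coe_range, Set.mem_Iio] at hi hj
    have hij' : s - i = s - j := hij
    omega
  set cyl : (Fin k ↪ α) → Set (ℕ → α) := fun g =>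
    {ω | ∀ t ∈ F, ω t = (fun t' => if h : s - t' < k then g ⟨s - t', h⟩
      else g ⟨0, by omega⟩) t} with hcyl
  have hsub : winEv k s ⊆ ⋃ g : Fin k ↪ α, cyl g := by
    intro ω hω
    obtain ⟨-, hdist⟩ := hω
    have hinj : Function.Injective (fun i : Fin k => ω (s - i)) := by
      intro i j hij
      exact Fin.ext (hdist i j i.isLt j.isLt hij)
    refine Set.mem_iUnion.mpr ⟨⟨_, hinj⟩, ?_⟩
    intro t ht
    simp only [hF, Finset.mem_image, Finset.mem_range] at ht
    obtain ⟨i, hi, rfl⟩ := ht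
    have h1 : s - (s - i) = i := by omega
    have h2 : s - (s - i) < k := by omega
    simp only [Function.Embedding.coeFn_mk, dif_pos h2]
    congr 1
    omega
  calc μ (winEv k s) ≤ μ (⋃ g : Fin k ↪ α, cyl g) := measure_mono hsub
    _ ≤ ∑' g : Fin k ↪ α, μ (cyl g) := measure_iUnion_le _
    _ = ∑ g : Fin k ↪ α, μ (cyl g) := tsum_fintype _
    _ = ∑ g : Fin k ↪ α, (1 / (k : ENNReal)) ^ k := by
        apply Finset.sum_congr rfl
        intro g _
        rw [hcyl]
        have := hiid F (fun t' => if h : s - t' < k then g ⟨s - t', h⟩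
          else g ⟨0, by omega⟩)
        rw [this, hFcard]
    _ = (Fintype.card (Fin k ↪ α) : ENNReal) * (1 / (k : ENNReal)) ^ k := by
        rw [Finset.sum_const, Finset.card_univ, nsmul_eq_mul]
    _ = (Nat.factorial k : ENNReal) * (1 / (k : ENNReal)) ^ k := by
        rw [Fintype.card_embedding_eq, hcard, Fintype.card_fin,
          Nat.descFactorial_self]

theorem statement14 (k : ℕ) (hk : 2 ≤ k) (α : Type) [Fintype α] [MeasurableSpace α]
    (hcard : Fintype.card α = k)
    (μ : Measure (ℕ → α)) [IsProbabilityMeasure μ]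
    (hiid : ∀ (s : Finset ℕ) (f : ℕ → α),
      μ {ω : ℕ → α | ∀ t ∈ s, ω t = f t} = (1 / (k : ENNReal)) ^ s.card) :
    ENNReal.ofReal ((k : ℝ) ^ k / (2 * (Nat.factorial k : ℝ)) - 1)
      ≤ ∫⁻ ω, winTime k ω ∂μ := by
  have hk0 : 0 < k := by omega
  have hfac0 : 0 < Nat.factorial k := Nat.factorial_pos k
  -- key real quantities
  set q : ℝ := (Nat.factorial k : ℝ) / (k : ℝ) ^ k with hq
  set N : ℕ := k ^ k / Nat.factorial k with hN
  have hkk0 : (0:ℝ) < (k:ℝ)^k := by positivity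
  have hfacR : (0:ℝ) < (Nat.factorial k : ℝ) := by exact_mod_cast hfac0
  have hq0 : 0 < q := by positivity
  -- N ≤ k^k / k!  and  k^k < (N+1) k!
  have hNle : (N : ℝ) * (Nat.factorial k : ℝ) ≤ (k:ℝ)^k := by
    have := Nat.div_mul_le_self (k ^ k) (Nat.factorial k)
    exact_mod_cast this
  have hNgt : (k:ℝ)^k < ((N : ℝ) + 1) * (Nat.factorial k : ℝ) := by
    have h1 : k ^ k < (N + 1) * Nat.factorial k := by
      have hmod := Nat.div_add_mod (k ^ k) (Nat.factorial k)
      have hlt := Nat.mod_lt (k ^ k) hfac0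
      calc k ^ k = Nat.factorial k * N + k ^ k % Nat.factorial k := hmod.symm
        _ < Nat.factorial k * N + Nat.factorial k := by omega
        _ = (N + 1) * Nat.factorial k := by ring
    exact_mod_cast h1
  have hNq : (N : ℝ) * q ≤ 1 := by
    have h1 : (N:ℝ) * q = ((N:ℝ) * (Nat.factorial k : ℝ)) / (k:ℝ)^k := by
      rw [hq]; ring
    rw [h1, div_le_one hkk0]
    exact hNle
  -- events and measurable hulls
  set p : ENNReal := (Nat.factorial k : ENNReal) * (1 / (k : ENNReal)) ^ k with hp
  have hpq : p = ENNReal.ofReal q := by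
    rw [hp, hq, ENNReal.ofReal_div_of_pos hkk0, ENNReal.ofReal_natCast,
      ENNReal.ofReal_pow (by positivity), ENNReal.ofReal_natCast,
      one_div, ← ENNReal.inv_pow, div_eq_mul_inv]
  set U : ℕ → Set (ℕ → α) := fun t => ⋃ s ∈ Finset.range (t + 1), winEv k s with hU
  set V : ℕ → Set (ℕ → α) := fun t => toMeasurable μ (U t) with hV
  have hVmeas : ∀ t, MeasurableSet (V t) := fun t => measurableSet_toMeasurable μ _
  have hUle : ∀ t : ℕ, μ (U t) ≤ (t + 1 : ℕ) * p := by
    intro t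
    calc μ (U t) ≤ ∑ s ∈ Finset.range (t + 1), μ (winEv k s) :=
          measure_biUnion_finset_le _ _
      _ ≤ ∑ _s ∈ Finset.range (t + 1), p := by
          apply Finset.sum_le_sum
          intro s _
          exact measure_winEv_le k hk α hcard μ hiid s
      _ = (t + 1 : ℕ) * p := by
          rw [Finset.sum_const, Finset.card_range, nsmul_eq_mul]
  have hVcompl : ∀ t : ℕ, 1 - (t + 1 : ℕ) * p ≤ μ ((V t)ᶜ) := by
    intro t
    rw [measure_compl (hVmeas t) (measure_ne_top μ _)]
    have h1 : μ (V t) = μ (U t) := measure_toMeasurable _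
    rw [measure_univ, h1]
    exact tsub_le_tsub_left (hUle t) 1
  -- pointwise bound
  have hpoint : ∀ ω, ∑ t ∈ Finset.range N,
      ((V t)ᶜ).indicator (1 : (ℕ → α) → ENNReal) ω ≤ winTime k ω := by
    intro ω
    apply sum_indicator_le_winTime
    intro t hω
    apply winTime_gt
    intro s hs hmem
    apply hω
    apply subset_toMeasurable
    rw [hU]
    exact Set.mem_biUnion (Finset.mem_range.mpr (by omega)) hmem
  -- lintegral chain
  have hlin : ∑ t ∈ Finset.range N, μ ((V t)ᶜ) ≤ ∫⁻ ω, winTime k ω ∂μ := by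
    calc ∑ t ∈ Finset.range N, μ ((V t)ᶜ)
        = ∑ t ∈ Finset.range N, ∫⁻ ω, ((V t)ᶜ).indicator 1 ω ∂μ := by
          apply Finset.sum_congr rfl
          intro t _
          rw [lintegral_indicator_one (hVmeas t).compl]
      _ = ∫⁻ ω, ∑ t ∈ Finset.range N, ((V t)ᶜ).indicator 1 ω ∂μ := by
          rw [lintegral_finset_sum]
          intro t _
          exact (measurable_one.indicator (hVmeas t).compl)
      _ ≤ ∫⁻ ω, winTime k ω ∂μ := lintegral_mono hpoint
  -- real-side bound (terms are nonneg)
  have hterm_nonneg : ∀ t ∈ Finset.range N, (0:ℝ) ≤ 1 - ((t:ℝ) + 1) * q := by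
    intro t ht
    rw [Finset.mem_range] at ht
    have h1 : ((t:ℝ) + 1) ≤ (N : ℝ) := by exact_mod_cast Nat.succ_le_of_lt ht
    nlinarith [hq0.le]
  have hsum_real : (k : ℝ) ^ k / (2 * (Nat.factorial k : ℝ)) - 1
      ≤ ∑ t ∈ Finset.range N, (1 - ((t:ℝ) + 1) * q) := by
    have hgauss : ∑ t ∈ Finset.range N, ((t:ℝ) + 1) = (N:ℝ) * ((N:ℝ) + 1) / 2 := by
      induction N with
      | zero => simp
      | succ n ih => rw [Finset.sum_range_succ, ih]; push_cast; ring
    have hsum : ∑ t ∈ Finset.range N, (1 - ((t:ℝ) + 1) * q)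
        = (N:ℝ) - q * ((N:ℝ) * ((N:ℝ) + 1) / 2) := by
      rw [Finset.sum_sub_distrib, ← Finset.sum_mul, hgauss]
      simp [mul_comm]
    rw [hsum]
    have hr : (k:ℝ)^k / (2 * (Nat.factorial k : ℝ)) = ((k:ℝ)^k / (Nat.factorial k)) / 2 := by
      ring
    have hrN : (k:ℝ)^k / (Nat.factorial k : ℝ) ≤ (N:ℝ) + 1 := by
      rw [div_le_iff₀ hfacR]
      exact hNgt.le
    have hq2 : q * ((N:ℝ) * ((N:ℝ) + 1) / 2) ≤ ((N:ℝ) + 1) / 2 := by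
      have hN1 : (0:ℝ) ≤ (N:ℝ) + 1 := by positivity
      calc q * ((N:ℝ) * ((N:ℝ) + 1) / 2) = ((N:ℝ) * q) * (((N:ℝ) + 1) / 2) := by ring
        _ ≤ 1 * (((N:ℝ) + 1) / 2) := by
            apply mul_le_mul_of_nonneg_right hNq (by positivity)
        _ = ((N:ℝ) + 1) / 2 := by ring
    rw [hr]
    have : ((k:ℝ)^k / (Nat.factorial k)) / 2 - 1 ≤ ((N:ℝ) - 1) / 2 := by
      linarith
    linarith
  -- ENNReal side
  have hterm : ∀ t ∈ Finset.range N,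
      ENNReal.ofReal (1 - ((t:ℝ) + 1) * q) ≤ μ ((V t)ᶜ) := by
    intro t ht
    refine le_trans ?_ (hVcompl t)
    rw [ENNReal.ofReal_sub _ (by positivity), ENNReal.ofReal_one,
      ENNReal.ofReal_mul (by positivity), ← hpq]
    have : ENNReal.ofReal ((t:ℝ) + 1) = ((t + 1 : ℕ) : ENNReal) := by
      push_cast
      rw [ENNReal.ofReal_add (by positivity) zero_le_one, ENNReal.ofReal_natCast,
        ENNReal.ofReal_one]
    rw [this]
  calc ENNReal.ofReal ((k : ℝ) ^ k / (2 * (Nat.factorial k : ℝ)) - 1)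
      ≤ ENNReal.ofReal (∑ t ∈ Finset.range N, (1 - ((t:ℝ) + 1) * q)) :=
        ENNReal.ofReal_le_ofReal hsum_real
    _ = ∑ t ∈ Finset.range N, ENNReal.ofReal (1 - ((t:ℝ) + 1) * q) :=
        ENNReal.ofReal_sum_of_nonneg hterm_nonneg
    _ ≤ ∑ t ∈ Finset.range N, μ ((V t)ᶜ) := Finset.sum_le_sum hterm
    _ ≤ ∫⁻ ω, winTime k ω ∂μ := hlin

end

end CGI
end

section
/- For every integer n ≥ 2, let K_n denote the complete communication graph on vertices v_1,…,v_n (with arc (v_x,v_y) for all distinct x,y), and let f(K_n) be its transformed graph. Then f(K_n) is a directed graph on 2n vertices with no self-loops, it is weakly connected, and it is not complete (there exist two distinct vertices u,w of f(K_n) with no arc from u to w). -/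
/-!
STATEMENT 15: For every `n ≥ 2`, the transformed graph `f(K_n)` of the complete
communication graph `K_n` is a directed graph on `2n` vertices with no self-loops,
it is weakly connected, and it is not complete.

Vertices are indexed `0, …, n-1` (so the distinguished vertex `v_1` of the paper is
index `0`) and the second copy uses indices `n, …, 2n-1`.
-/

namespace CGI

/-- The arc relation of the complete graph `K_n` on the vertices `0, …, n-1`,
expressed on `ℕ`. -/
def KnE (n : ℕ) : ℕ → ℕ → Prop := fun x y => x < n ∧ y < n ∧ x ≠ y

/-- The arc relation of the transformed graph `f(G)` on the vertices `0, …, 2n-1`,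
expressed on `ℕ`, for a graph `G` with arc relation `E` on the vertices `0, …, n-1`:
two disjoint copies of `G` (indices `z` and `z+n`), except that every arc incident to
the distinguished vertex `0` crosses between the two copies
(`(0, z+n)`, `(n, z)` for arcs `(0, z)` of `G`, and
`(z+n, 0)`, `(z, n)` for arcs `(z, 0)` of `G`). -/
def ftrans (n : ℕ) (E : ℕ → ℕ → Prop) : ℕ → ℕ → Prop := fun u w =>
  (u < n ∧ w < n ∧ E u w) ∨
  (n ≤ u ∧ u < 2 * n ∧ n ≤ w ∧ w < 2 * n ∧ E (u - n) (w - n)) ∨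
  (u = 0 ∧ n ≤ w ∧ w < 2 * n ∧ E 0 (w - n)) ∨
  (u = n ∧ w < n ∧ E 0 w) ∨
  (n ≤ u ∧ u < 2 * n ∧ w = 0 ∧ E (u - n) 0) ∨
  (u < n ∧ w = n ∧ E u 0)

theorem statement15 (n : ℕ) (hn : 2 ≤ n) :
    -- the arc relation of `f(K_n)`, on the `2n`-element vertex set `Fin (2*n)`
    ∀ R : Fin (2 * n) → Fin (2 * n) → Prop,
      (R = fun u w => ftrans n (KnE n) u.val w.val) →
        (∀ u, ¬ R u u) ∧
        (∀ u w : Fin (2 * n),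
          Relation.ReflTransGen (fun a b => R a b ∨ R b a) u w) ∧
        (∃ u w : Fin (2 * n), u ≠ w ∧ ¬ R u w) := by
  intro R hR
  subst hR
  have hn0 : 0 < 2 * n := by omega
  refine ⟨?_, ?_, ?_⟩
  · intro u
    simp only [ftrans, KnE, true_and, and_true]
    omega
  · have hsym : Symmetric (fun a b : Fin (2 * n) =>
        ftrans n (KnE n) a.1 b.1 ∨ ftrans n (KnE n) b.1 a.1) := by
      intro a b h; exact h.symm
    have key : ∀ u : Fin (2 * n), Relation.ReflTransGen
        (fun a b : Fin (2 * n) => ftrans n (KnE n) a.1 b.1 ∨ ftrans n (KnE n) b.1 a.1)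
        u ⟨0, hn0⟩ := by
      intro u
      rcases Nat.lt_or_ge u.1 n with h | h
      · rcases Nat.eq_zero_or_pos u.1 with h0 | h0
        · have : u = ⟨0, hn0⟩ := Fin.ext h0
          rw [this]
        · refine Relation.ReflTransGen.single (Or.inl ?_)
          show ftrans n (KnE n) u.1 0
          simp only [ftrans, KnE, true_and, and_true]; omega
      · rcases Nat.lt_or_ge n u.1 with h1 | h1
        · refine Relation.ReflTransGen.single (Or.inl ?_)
          show ftrans n (KnE n) u.1 0
          simp only [ftrans, KnE, true_and, and_true]; omega
        · have h2 : u.1 = n := le_antisymm h1 h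
          refine Relation.ReflTransGen.head (b := ⟨1, by omega⟩) (Or.inl ?_)
            (Relation.ReflTransGen.single (Or.inl ?_))
          · show ftrans n (KnE n) u.1 1
            simp only [ftrans, KnE, true_and, and_true]; omega
          · show ftrans n (KnE n) 1 0
            simp only [ftrans, KnE, true_and, and_true]; omega
    intro u w
    exact (key u).trans ((@Relation.ReflTransGen.stdSymm _ _ ⟨fun a b h => hsym h⟩).symm _ _ (key w))
  · refine ⟨⟨0, hn0⟩, ⟨n, by omega⟩, ?_, ?_⟩
    · exact Fin.ne_of_val_ne (show (0 : ℕ) ≠ n by omega)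
    · show ¬ ftrans n (KnE n) 0 n
      simp only [ftrans, KnE, true_and, and_true]; omega

end CGI
end
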